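/- arXiv:math/0205134 — 5 statements merged into one kernel-verified Lean document; each statement's English description precedes it below -/
import Mathlib

section
/- Let P and Q be rational functions over ℂ (elements of RatFunc ℂ) with P nonconstant. Then, inside the field ℂ(z) = RatFunc ℂ, one has the degree identity [ℂ(P,Q) : ℂ(P)] · [ℂ(z) : ℂ(P,Q)] = deg P, where ℂ(P) and ℂ(P,Q) denote the intermediate fields of ℂ(z)/ℂ generated by P, respectively by P and Q, and deg P denotes the degree of the rational function P (the maximum of the degrees of its numerator and denominator in lowest terms). In particular [ℂ(z) : ℂ(P)] = deg P. -/
open Polynomial IntermediateField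


noncomputable section LurothAux

/-- the coefficient-swap endomorphism of `ℂ[X][Y]`. -/
def swapXY : Polynomial (Polynomial ℂ) →+* Polynomial (Polynomial ℂ) :=
  eval₂RingHom (eval₂RingHom ((C : Polynomial ℂ →+* _).comp (C : ℂ →+* Polynomial ℂ)) X) (C X)

lemma swapXY_swapXY : (swapXY).comp (swapXY) = RingHom.id _ := by
  ext <;> simp [swapXY]

lemma swapXY_C_map (a : Polynomial ℂ) :
    swapXY (Polynomial.C a) = a.map (C : ℂ →+* Polynomial ℂ) := by
  simp only [swapXY, coe_eval₂RingHom, eval₂_C]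
  rfl

lemma swapXY_X : swapXY (X : Polynomial (Polynomial ℂ)) = C X := by
  simp [swapXY]

/-- swap as ring equiv -/
def swapE : Polynomial (Polynomial ℂ) ≃+* Polynomial (Polynomial ℂ) :=
  RingEquiv.ofRingHom swapXY swapXY swapXY_swapXY swapXY_swapXY

lemma aeval_ratFuncX (g : Polynomial ℂ) :
    Polynomial.aeval (RatFunc.X : RatFunc ℂ) g = algebraMap (Polynomial ℂ) (RatFunc ℂ) g := by
  have h := Polynomial.aeval_algHom_apply (IsScalarTower.toAlgHom ℂ (Polynomial ℂ) (RatFunc ℂ)) X g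
  simpa using h

lemma adjoin_ratFuncX_top :
    IntermediateField.adjoin ℂ ({RatFunc.X} : Set (RatFunc ℂ)) = ⊤ := by
  rw [eq_top_iff]
  rintro f -
  rw [← RatFunc.num_div_denom f]
  apply div_mem
  · rw [← aeval_ratFuncX]
    exact IntermediateField.algebra_adjoin_le_adjoin ℂ _ (Polynomial.aeval_mem_adjoin_singleton ℂ _)
  · rw [← aeval_ratFuncX]
    exact IntermediateField.algebra_adjoin_le_adjoin ℂ _ (Polynomial.aeval_mem_adjoin_singleton ℂ _)

lemma ratC_inj : Function.Injective (RatFunc.C : ℂ → RatFunc ℂ) := RingHom.injective _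

lemma ratFuncX_ne_C (c : ℂ) : (RatFunc.X : RatFunc ℂ) ≠ RatFunc.C c := by
  intro h
  rw [← RatFunc.algebraMap_X, ← RatFunc.algebraMap_C] at h
  exact Polynomial.X_ne_C c (RatFunc.algebraMap_injective ℂ h)

set_option maxHeartbeats 1000000 in
theorem luroth_finrank (P : RatFunc ℂ) (hP : ∀ c : ℂ, P ≠ RatFunc.C c) :
    FiniteDimensional ↥(IntermediateField.adjoin ℂ ({P} : Set (RatFunc ℂ))) (RatFunc ℂ) ∧
    Module.finrank ↥(IntermediateField.adjoin ℂ ({P} : Set (RatFunc ℂ))) (RatFunc ℂ) =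
      max P.num.natDegree P.denom.natDegree := by
  classical
  set a : Polynomial ℂ := P.num with ha_def
  set b : Polynomial ℂ := P.denom with hb_def
  set n : ℕ := max a.natDegree b.natDegree with hn_def
  have hP0 : P ≠ 0 := by simpa using hP 0
  have ha : a ≠ 0 := RatFunc.num_ne_zero hP0
  have hb : b ≠ 0 := P.denom_ne_zero
  -- n ≥ 1
  have hn1 : 1 ≤ n := by
    by_contra h
    push_neg at h
    have hna : a.natDegree = 0 := by omega
    have hnb : b.natDegree = 0 := by omega
    have ha0 : a = Polynomial.C (a.coeff 0) := Polynomial.eq_C_of_natDegree_eq_zero hna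
    have hb0 : b = Polynomial.C (b.coeff 0) := Polynomial.eq_C_of_natDegree_eq_zero hnb
    apply hP (a.coeff 0 / b.coeff 0)
    rw [← RatFunc.num_div_denom P, ← ha_def, ← hb_def]
    conv_lhs => rw [ha0, hb0]
    rw [RatFunc.algebraMap_C, RatFunc.algebraMap_C, map_div₀]
  -- transcendence of P
  have htr : Transcendental ℂ P := by
    intro halg
    have hint : IsIntegral ℂ P := halg.isIntegral
    have h1 : (minpoly ℂ P).degree = 1 :=
      IsAlgClosed.degree_eq_one_of_irreducible ℂ (minpoly.irreducible hint)
    obtain ⟨c, hc⟩ := minpoly.degree_eq_one_iff.mp h1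
    exact hP c (by rw [← hc, RatFunc.algebraMap_eq_C])
  have hinj : Function.Injective (Polynomial.aeval P : Polynomial ℂ →ₐ[ℂ] (RatFunc ℂ)) :=
    transcendental_iff_injective.mp htr
  set φ : RatFunc ℂ →ₐ[ℂ] (RatFunc ℂ) := RatFunc.liftAlgHom (Polynomial.aeval P)
    (nonZeroDivisors_le_comap_nonZeroDivisors_of_injective _ hinj) with hφ_def
  have hφ_alg : ∀ g : Polynomial ℂ, φ (algebraMap (Polynomial ℂ) (RatFunc ℂ) g) =
      Polynomial.aeval P g := by
    intro g
    have := RatFunc.liftAlgHom_apply_div' (Polynomial.aeval P)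
      (nonZeroDivisors_le_comap_nonZeroDivisors_of_injective _ hinj) g 1
    simpa using this
  have hφX : φ RatFunc.X = P := by
    rw [← RatFunc.algebraMap_X, hφ_alg]; simp
  have hφinj : Function.Injective φ := RatFunc.liftAlgHom_injective _ hinj _
  have hrange : φ.fieldRange = IntermediateField.adjoin ℂ ({P} : Set (RatFunc ℂ)) := by
    apply le_antisymm
    · rintro x ⟨y, rfl⟩
      rw [← RatFunc.num_div_denom y, map_div₀]
      simp only [AlgHom.toRingHom_eq_coe, RingHom.coe_coe]
      rw [hφ_alg, hφ_alg]
      apply div_mem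
      · exact IntermediateField.algebra_adjoin_le_adjoin ℂ _
          (Polynomial.aeval_mem_adjoin_singleton ℂ _)
      · exact IntermediateField.algebra_adjoin_le_adjoin ℂ _
          (Polynomial.aeval_mem_adjoin_singleton ℂ _)
    · rw [IntermediateField.adjoin_le_iff]
      rintro x rfl
      exact ⟨RatFunc.X, hφX⟩
  -- the three polynomials
  set r : Polynomial (Polynomial ℂ) := Polynomial.C a - X * Polynomial.C b with hr_def
  set q0 : Polynomial (Polynomial ℂ) :=
    a.map (C : ℂ →+* Polynomial ℂ) - Polynomial.C X * b.map (C : ℂ →+* Polynomial ℂ) with hq0_def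
  have hq0_swap : swapXY r = q0 := by
    rw [hr_def, hq0_def, map_sub, map_mul, swapXY_C_map, swapXY_C_map, swapXY_X]
  set q : Polynomial (RatFunc ℂ) := q0.map (algebraMap (Polynomial ℂ) (RatFunc ℂ)) with hq_def
  -- coefficients of q
  have hq_coeff : ∀ i, q.coeff i =
      RatFunc.C (a.coeff i) - RatFunc.X * RatFunc.C (b.coeff i) := by
    intro i
    simp [hq_def, hq0_def, Polynomial.coeff_map, RatFunc.algebraMap_C, RatFunc.algebraMap_X]
  have hlead : a.coeff n ≠ 0 ∨ b.coeff n ≠ 0 := by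
    rcases max_cases a.natDegree b.natDegree with ⟨h1, h2⟩ | ⟨h1, h2⟩
    · left; rw [hn_def, h1]; exact Polynomial.leadingCoeff_ne_zero.mpr ha
    · right; rw [hn_def, h1]; exact Polynomial.leadingCoeff_ne_zero.mpr hb
  have hcn : q.coeff n ≠ 0 := by
    rw [hq_coeff n]
    intro hcontra
    rw [sub_eq_zero] at hcontra
    by_cases hbn : b.coeff n = 0
    · have han : a.coeff n ≠ 0 := hlead.resolve_right (by simp [hbn])
      apply han
      apply ratC_inj
      rw [hcontra, hbn]
      simp
    · have hCbn : RatFunc.C (b.coeff n) ≠ 0 := by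
        intro h0
        exact hbn (ratC_inj (by rw [h0]; simp))
      apply ratFuncX_ne_C (a.coeff n / b.coeff n)
      rw [map_div₀, hcontra, mul_div_assoc, div_self hCbn, mul_one]
  have hq_natDegree : q.natDegree = n := by
    have h1 : q.natDegree ≤ n := by
      apply Polynomial.natDegree_le_iff_coeff_eq_zero.mpr
      intro m hm
      rw [hq_coeff m]
      have hma : a.coeff m = 0 := Polynomial.coeff_eq_zero_of_natDegree_lt
        (lt_of_le_of_lt (le_max_left _ _) hm)
      have hmb : b.coeff m = 0 := Polynomial.coeff_eq_zero_of_natDegree_lt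
        (lt_of_le_of_lt (le_max_right _ _) hm)
      simp [hma, hmb]
    exact le_antisymm h1 (Polynomial.le_natDegree_of_ne_zero hcn)
  have hq0 : q ≠ 0 := fun h => hcn (by simp [h])
  -- irreducibility of r
  have hr_prim : r.IsPrimitive := by
    intro d hd
    rw [Polynomial.C_dvd_iff_dvd_coeff] at hd
    have hc0 : r.coeff 0 = a := by simp [hr_def]
    have hc1 : r.coeff 1 = -b := by simp [hr_def, Polynomial.coeff_X_mul]
    have h0 : d ∣ a := by have := hd 0; rwa [hc0] at this
    have h1 : d ∣ b := by have := hd 1; rw [hc1] at this; exact dvd_neg.mp this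
    exact (RatFunc.isCoprime_num_denom P).isUnit_of_dvd' h0 h1
  have hr_irr : Irreducible r := by
    apply hr_prim.irreducible_of_irreducible_map_of_injective
      (IsFractionRing.injective (Polynomial ℂ) (RatFunc ℂ))
    have hmap : r.map (algebraMap (Polynomial ℂ) (RatFunc ℂ)) =
        C (-(algebraMap (Polynomial ℂ) (RatFunc ℂ) b)) * X +
          C (algebraMap (Polynomial ℂ) (RatFunc ℂ) a) := by
      rw [hr_def, Polynomial.map_sub, Polynomial.map_mul, Polynomial.map_C, Polynomial.map_C,
        Polynomial.map_X, map_neg]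
      ring
    rw [hmap]
    refine Polynomial.irreducible_of_degree_eq_one (Polynomial.degree_linear ?_)
    simp only [ne_eq, neg_eq_zero]
    exact fun h => hb ((RatFunc.algebraMap_injective ℂ) (by simpa using h))
  -- irreducibility of q0
  have hq0_irr : Irreducible q0 := by
    rw [← hq0_swap]
    exact (MulEquiv.irreducible_iff (swapE : Polynomial (Polynomial ℂ) ≃+*
      Polynomial (Polynomial ℂ))).mpr hr_irr
  have hq0_natDegree : q0.natDegree = n := by
    rw [← hq_natDegree, hq_def,
      Polynomial.natDegree_map_eq_of_injective (RatFunc.algebraMap_injective ℂ)]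
  have hq0_prim : q0.IsPrimitive := by
    intro d hd
    obtain ⟨e, he⟩ := hd
    rcases hq0_irr.isUnit_or_isUnit he with hu | hu
    · exact Polynomial.isUnit_C.mp hu
    · exfalso
      obtain ⟨u, hu', hCu⟩ := Polynomial.isUnit_iff.mp hu
      rw [he, ← hCu, ← Polynomial.C_mul] at hq0_natDegree
      rw [Polynomial.natDegree_C] at hq0_natDegree
      omega
  -- irreducibility of q
  have hq_irr : Irreducible q :=
    (hq0_prim.irreducible_iff_irreducible_map_fraction_map).mp hq0_irr
  -- transport to the intermediate field F = ℂ(P)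
  set F : IntermediateField ℂ (RatFunc ℂ) :=
    IntermediateField.adjoin ℂ ({P} : Set (RatFunc ℂ)) with hF_def
  have hmem : ∀ x, φ x ∈ F.toSubalgebra := by
    intro x
    have h : φ x ∈ φ.fieldRange := ⟨x, rfl⟩
    rw [hrange] at h
    exact h
  set ψ : RatFunc ℂ →ₐ[ℂ] ↥F := φ.codRestrict F.toSubalgebra hmem with hψ_def
  have hψ_bij : Function.Bijective ψ := by
    constructor
    · intro x y hxy
      exact hφinj (congrArg Subtype.val hxy)
    · rintro ⟨y, hy⟩
      rw [← hrange] at hy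
      obtain ⟨x, hx⟩ := hy
      exact ⟨x, Subtype.ext hx⟩
  set eR : RatFunc ℂ ≃ₐ[ℂ] ↥F := AlgEquiv.ofBijective ψ hψ_bij with heR_def
  set p : Polynomial ↥F := q.map (eR.toRingEquiv : RatFunc ℂ →+* ↥F) with hp_def
  have hp_irr : Irreducible p := by
    have h := (MulEquiv.irreducible_iff (Polynomial.mapEquiv eR.toRingEquiv)).mpr hq_irr
    rwa [Polynomial.mapEquiv_apply] at h
  have hp_ne : p ≠ 0 := hp_irr.ne_zero
  have hp_deg : p.natDegree = n := by
    rw [hp_def, Polynomial.natDegree_map_eq_of_injective, hq_natDegree]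
    exact eR.toRingEquiv.injective
  -- X is a root of p over F
  have hbK : algebraMap (Polynomial ℂ) (RatFunc ℂ) b ≠ 0 := fun h =>
    hb ((RatFunc.algebraMap_injective ℂ) (by simpa using h))
  have hc1 : (algebraMap ↥F (RatFunc ℂ)).comp (eR.toRingEquiv : RatFunc ℂ →+* ↥F)
      = φ.toRingHom := RingHom.ext fun x => rfl
  have hc2 : (φ.toRingHom : RatFunc ℂ →+* RatFunc ℂ).comp (algebraMap (Polynomial ℂ) (RatFunc ℂ))
      = ((Polynomial.aeval P : Polynomial ℂ →ₐ[ℂ] RatFunc ℂ) : Polynomial ℂ →+* RatFunc ℂ) :=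
    RingHom.ext fun g => hφ_alg g
  have hc3 : ((Polynomial.aeval P : Polynomial ℂ →ₐ[ℂ] RatFunc ℂ) :
      Polynomial ℂ →+* RatFunc ℂ).comp (Polynomial.C) = algebraMap ℂ (RatFunc ℂ) :=
    RingHom.ext fun c => by simp
  have haev : Polynomial.aeval (RatFunc.X : RatFunc ℂ) p = 0 := by
    rw [Polynomial.aeval_def, hp_def, Polynomial.eval₂_map, hc1, hq_def, Polynomial.eval₂_map,
      hc2, hq0_def, Polynomial.eval₂_sub, Polynomial.eval₂_mul, Polynomial.eval₂_C,
      Polynomial.eval₂_map, Polynomial.eval₂_map, hc3]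
    have hea : Polynomial.eval₂ (algebraMap ℂ (RatFunc ℂ)) RatFunc.X a
        = algebraMap (Polynomial ℂ) (RatFunc ℂ) a := aeval_ratFuncX a
    have heb : Polynomial.eval₂ (algebraMap ℂ (RatFunc ℂ)) RatFunc.X b
        = algebraMap (Polynomial ℂ) (RatFunc ℂ) b := aeval_ratFuncX b
    rw [hea, heb]
    have hPX : ((Polynomial.aeval P : Polynomial ℂ →ₐ[ℂ] RatFunc ℂ) :
        Polynomial ℂ →+* RatFunc ℂ) X = P := by simp
    rw [hPX]
    have : P * algebraMap (Polynomial ℂ) (RatFunc ℂ) b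
        = algebraMap (Polynomial ℂ) (RatFunc ℂ) a := by
      rw [← RatFunc.num_div_denom P]
      exact div_mul_cancel₀ _ hbK
    rw [this, sub_self]
  have hz_int : IsIntegral ↥F (RatFunc.X : RatFunc ℂ) :=
    IsAlgebraic.isIntegral ⟨p, hp_ne, haev⟩
  have htop : IntermediateField.adjoin ↥F ({RatFunc.X} : Set (RatFunc ℂ)) = ⊤ := by
    rw [eq_top_iff]
    intro x _
    have hx : x ∈ IntermediateField.adjoin ℂ ({RatFunc.X} : Set (RatFunc ℂ)) := by
      rw [adjoin_ratFuncX_top]; trivial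
    have hmemX : RatFunc.X ∈
        (IntermediateField.adjoin ↥F ({RatFunc.X} : Set (RatFunc ℂ))).restrictScalars ℂ :=
      IntermediateField.subset_adjoin ↥F _ rfl
    have hle : IntermediateField.adjoin ℂ ({RatFunc.X} : Set (RatFunc ℂ)) ≤
        (IntermediateField.adjoin ↥F ({RatFunc.X} : Set (RatFunc ℂ))).restrictScalars ℂ :=
      IntermediateField.adjoin_le_iff.mpr (Set.singleton_subset_iff.mpr hmemX)
    exact hle hx
  have eqv : ↥(IntermediateField.adjoin ↥F ({RatFunc.X} : Set (RatFunc ℂ))) ≃ₐ[↥F] RatFunc ℂ :=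
    (IntermediateField.equivOfEq htop).trans IntermediateField.topEquiv
  haveI hfd1 : FiniteDimensional ↥F
      ↥(IntermediateField.adjoin ↥F ({RatFunc.X} : Set (RatFunc ℂ))) :=
    IntermediateField.adjoin.finiteDimensional hz_int
  haveI hFD : FiniteDimensional ↥F (RatFunc ℂ) := Module.Finite.equiv eqv.toLinearEquiv
  refine ⟨hFD, ?_⟩
  have h1 : Module.finrank ↥F (RatFunc ℂ) =
      Module.finrank ↥F ↥(IntermediateField.adjoin ↥F ({RatFunc.X} : Set (RatFunc ℂ))) :=
    eqv.toLinearEquiv.finrank_eq.symm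
  rw [h1, IntermediateField.adjoin.finrank hz_int]
  have hmin := minpoly.eq_of_irreducible hp_irr haev
  rw [← hmin, Polynomial.natDegree_mul hp_ne, Polynomial.natDegree_C, add_zero, hp_deg]
  exact fun h => (Polynomial.leadingCoeff_ne_zero.mpr hp_ne)
    (by simpa using (Polynomial.C_eq_zero.mp h))

end LurothAux

/-- Lemma 1 of Pakovich, "On the polynomial moment problem" (in field form):
for rational functions `P, Q ∈ ℂ(z)` with `P` nonconstant, one has
`[ℂ(P,Q) : ℂ(P)] · [ℂ(z) : ℂ(P,Q)] = deg P`, and `[ℂ(z) : ℂ(P)] = deg P`,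
where `deg P = max (deg num P) (deg denom P)`. -/
theorem finrank_adjoin_pair_mul_finrank
    (P Q : RatFunc ℂ) (hP : ∀ c : ℂ, P ≠ RatFunc.C c) :
    Module.finrank ↥(IntermediateField.adjoin ℂ ({P} : Set (RatFunc ℂ)))
        ↥(IntermediateField.extendScalars
          (show IntermediateField.adjoin ℂ ({P} : Set (RatFunc ℂ)) ≤
              IntermediateField.adjoin ℂ ({P, Q} : Set (RatFunc ℂ)) from
            IntermediateField.adjoin.mono ℂ _ _ (Set.singleton_subset_iff.mpr
              (Set.mem_insert P {Q})))) *
      Module.finrank ↥(IntermediateField.adjoin ℂ ({P, Q} : Set (RatFunc ℂ))) (RatFunc ℂ) =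
      max P.num.natDegree P.denom.natDegree ∧
    Module.finrank ↥(IntermediateField.adjoin ℂ ({P} : Set (RatFunc ℂ))) (RatFunc ℂ) =
      max P.num.natDegree P.denom.natDegree := by
  obtain ⟨hFD, hrank⟩ := luroth_finrank P hP
  refine ⟨?_, hrank⟩
  rw [← hrank]
  rw [← IntermediateField.relfinrank_eq_finrank_of_le]
  exact IntermediateField.relfinrank_mul_finrank_top (IntermediateField.adjoin.mono ℂ _ _
    (Set.singleton_subset_iff.mpr (Set.mem_insert P {Q})))
end

section
/- Let P be a nonconstant rational function over ℂ (an element of RatFunc ℂ). Then the degree of the field extension ℂ(z)/ℂ(P) equals deg P, i.e. the finrank of RatFunc ℂ over the intermediate field generated by P over ℂ equals the maximum of the degrees of the numerator and denominator of P in lowest terms. -/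
open Polynomial IntermediateField

noncomputable section SwapAux

variable (R : Type*) [CommSemiring R]

/-- The variable-swap ring homomorphism on `R[X][X]`. -/
def swapPolyHom : Polynomial (Polynomial R) →+* Polynomial (Polynomial R) :=
  eval₂RingHom (mapRingHom Polynomial.C) (Polynomial.C Polynomial.X)

@[simp] lemma swapPolyHom_C (p : Polynomial R) :
    swapPolyHom R (C p) = p.map Polynomial.C := by
  simp [swapPolyHom]

@[simp] lemma swapPolyHom_X : swapPolyHom R (X : Polynomial (Polynomial R)) = C X := by
  simp [swapPolyHom]

lemma swapPolyHom_comp_self : (swapPolyHom R).comp (swapPolyHom R) = RingHom.id _ := by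
  apply Polynomial.ringHom_ext'
  · apply Polynomial.ringHom_ext'
    · ext c
      simp
    · simp
  · simp

/-- The variable-swap ring equivalence on `R[X][X]`. -/
def swapPolyEquiv : Polynomial (Polynomial R) ≃+* Polynomial (Polynomial R) :=
  RingEquiv.ofRingHom (swapPolyHom R) (swapPolyHom R)
    (swapPolyHom_comp_self R) (swapPolyHom_comp_self R)

@[simp] lemma swapPolyEquiv_apply (p : Polynomial (Polynomial R)) :
    swapPolyEquiv R p = swapPolyHom R p := rfl

end SwapAux

/-- For a nonconstant rational function `P ∈ ℂ(z)`, the degree of the field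
extension `ℂ(z)/ℂ(P)` equals `deg P = max (deg num P) (deg denom P)`. -/
theorem finrank_adjoin_ratFunc_eq_deg
    (P : RatFunc ℂ) (hP : ∀ c : ℂ, P ≠ RatFunc.C c) :
    Module.finrank ↥(IntermediateField.adjoin ℂ ({P} : Set (RatFunc ℂ))) (RatFunc ℂ) =
      max P.num.natDegree P.denom.natDegree := by
  classical
  have hP0 : P ≠ 0 := by simpa using hP 0
  have hf0 : P.num ≠ 0 := RatFunc.num_ne_zero hP0
  have hg0 : P.denom ≠ 0 := P.denom_ne_zero
  have hcop : IsCoprime P.num P.denom := P.isCoprime_num_denom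
  set f := P.num with hfdef
  set g := P.denom with hgdef
  set n := max f.natDegree g.natDegree with hndef
  -- transcendence of `P` over `ℂ`
  have htr : Transcendental ℂ P := by
    intro halg
    have hint : IsIntegral ℂ P := halg.isIntegral
    obtain ⟨c, hc⟩ := minpoly.mem_range_of_degree_eq_one ℂ P
      (IsAlgClosed.degree_eq_one_of_irreducible ℂ (minpoly.irreducible hint))
    exact hP c (by rw [← hc, RatFunc.algebraMap_eq_C])
  have hinj : Function.Injective (Polynomial.aeval P : Polynomial ℂ →ₐ[ℂ] RatFunc ℂ) :=
    transcendental_iff_injective.mp htr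
  set φ : RatFunc ℂ →ₐ[ℂ] RatFunc ℂ :=
    RatFunc.liftAlgHom (Polynomial.aeval P)
      (nonZeroDivisors_le_comap_nonZeroDivisors_of_injective _ hinj) with hφdef
  have hφinj : Function.Injective φ := RatFunc.liftAlgHom_injective _ hinj _
  have hφpoly : ∀ p : Polynomial ℂ,
      φ (algebraMap (Polynomial ℂ) (RatFunc ℂ) p) = Polynomial.aeval P p := by
    intro p
    have h := RatFunc.liftAlgHom_apply_div (φ := Polynomial.aeval P)
      (hφ := nonZeroDivisors_le_comap_nonZeroDivisors_of_injective _ hinj) p 1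
    simpa using h
  have hφX : φ RatFunc.X = P := by
    rw [← RatFunc.algebraMap_X (K := ℂ), hφpoly, Polynomial.aeval_X]
  have hφC : ∀ c : ℂ, φ (RatFunc.C c) = RatFunc.C c := by
    intro c
    have h := φ.commutes c
    rwa [RatFunc.algebraMap_eq_C] at h
  set K := IntermediateField.adjoin ℂ ({P} : Set (RatFunc ℂ)) with hKdef
  have hPmem : P ∈ K := IntermediateField.mem_adjoin_simple_self ℂ P
  have haemem : ∀ p : Polynomial ℂ, Polynomial.aeval P p ∈ K := by
    intro p
    have h : Polynomial.aeval P p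
        = algebraMap K (RatFunc ℂ) (Polynomial.aeval (⟨P, hPmem⟩ : K) p) :=
      Polynomial.aeval_algebraMap_apply (RatFunc ℂ) (⟨P, hPmem⟩ : K) p
    rw [h]
    exact SetLike.coe_mem _
  have hrange : ∀ x, φ x ∈ K := by
    intro x
    refine RatFunc.induction_on (P := fun y => φ y ∈ K) x ?_
    intro p q hq
    rw [map_div₀, hφpoly, hφpoly]
    exact div_mem (haemem p) (haemem q)
  have hsurj : ∀ y : K, ∃ x, φ x = (y : RatFunc ℂ) := by
    have hle : K ≤ φ.fieldRange := by
      rw [hKdef, IntermediateField.adjoin_le_iff]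
      rintro x hx
      rw [Set.mem_singleton_iff] at hx
      subst hx
      exact ⟨RatFunc.X, hφX⟩
    intro y
    exact hle y.2
  set e : RatFunc ℂ ≃+* K :=
    RingEquiv.ofBijective ((φ : RatFunc ℂ →+* RatFunc ℂ).codRestrict K hrange)
      ⟨fun a b hab => hφinj (congrArg Subtype.val hab),
       fun y => by obtain ⟨x, hx⟩ := hsurj y; exact ⟨x, Subtype.ext hx⟩⟩ with hedef
  have heX : e RatFunc.X = (⟨P, hPmem⟩ : K) := Subtype.ext hφX
  have heC : ∀ c : ℂ, e (RatFunc.C c) = algebraMap ℂ K c := by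
    intro c
    apply Subtype.ext
    have h1 : (e (RatFunc.C c) : RatFunc ℂ) = φ (RatFunc.C c) := rfl
    rw [h1, hφC]
    have h2 : (algebraMap ℂ K c : RatFunc ℂ) = algebraMap ℂ (RatFunc ℂ) c :=
      (IsScalarTower.algebraMap_apply ℂ K (RatFunc ℂ) c).symm
    rw [h2, RatFunc.algebraMap_eq_C]
  -- the bivariate polynomial G and its swap F
  set A := algebraMap (Polynomial ℂ) (RatFunc ℂ) with hAdef
  set G : Polynomial (Polynomial ℂ) := C g * X - C f with hGdef
  have hGprim : G.IsPrimitive := by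
    intro r hr
    rw [Polynomial.C_dvd_iff_dvd_coeff] at hr
    have h1 : r ∣ g := by
      have h := hr 1
      simpa [hGdef, coeff_sub] using h
    have h0 : r ∣ f := by
      have h := hr 0
      rw [hGdef] at h
      simp only [coeff_sub, mul_comm, Polynomial.coeff_C_mul] at h
      simpa [dvd_neg] using h
    obtain ⟨u, v, huv⟩ := hcop
    exact isUnit_of_dvd_one (by rw [← huv]; exact dvd_add (h0.mul_left u) (h1.mul_left v))
  have hGm : G.map A = C (A g) * X - C (A f) := by
    rw [hGdef]
    simp [Polynomial.map_sub, Polynomial.map_mul]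
  have hGmdeg : (G.map A).degree = 1 := by
    rw [hGm, sub_eq_add_neg, ← Polynomial.C_neg]
    exact Polynomial.degree_linear (RatFunc.algebraMap_ne_zero hg0)
  have hGirr : Irreducible G :=
    hGprim.irreducible_iff_irreducible_map_fraction_map.mpr
      (Polynomial.irreducible_of_degree_eq_one hGmdeg)
  set F : Polynomial (Polynomial ℂ) := swapPolyHom ℂ G with hFdef
  have hF : F = g.map Polynomial.C * C X - f.map Polynomial.C := by
    rw [hFdef, hGdef, map_sub, map_mul, swapPolyHom_C, swapPolyHom_C, swapPolyHom_X]
  have hFirr : Irreducible F := by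
    have h : Irreducible (swapPolyEquiv ℂ G) :=
      (MulEquiv.irreducible_iff (swapPolyEquiv ℂ)).mpr hGirr
    simpa [swapPolyEquiv_apply] using h
  have hcoeffF : ∀ i, F.coeff i = Polynomial.C (g.coeff i) * X - Polynomial.C (f.coeff i) := by
    intro i
    rw [hF]
    simp [coeff_sub, Polynomial.coeff_mul_C, Polynomial.coeff_map]
  have hFprim : F.IsPrimitive := by
    intro r hr
    by_contra hru
    rw [Polynomial.C_dvd_iff_dvd_coeff] at hr
    have hr0 : r ≠ 0 := by
      rintro rfl
      have h := hr g.natDegree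
      rw [zero_dvd_iff, hcoeffF] at h
      have h1 := congrArg (fun p => Polynomial.coeff p 1) h
      simp at h1
      exact hg0 h1
    obtain ⟨z, hz⟩ := Complex.exists_root (Polynomial.degree_pos_of_ne_zero_of_nonunit hr0 hru)
    have hev : ∀ i, f.coeff i = z * g.coeff i := by
      intro i
      have hdvd := hr i
      rw [hcoeffF] at hdvd
      have h := Polynomial.eval_eq_zero_of_dvd_of_eval_eq_zero hdvd hz
      simp only [Polynomial.eval_sub, Polynomial.eval_mul, Polynomial.eval_C,
        Polynomial.eval_X, sub_eq_zero] at h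
      rw [← h, mul_comm]
    have hfg : f = Polynomial.C z * g := by
      ext i
      rw [Polynomial.coeff_C_mul]
      exact hev i
    refine hP z ?_
    rw [← P.num_div_denom, ← hfdef, ← hgdef, hfg, map_mul, RatFunc.algebraMap_C,
      mul_div_assoc, div_self (RatFunc.algebraMap_ne_zero hg0), mul_one]
  set Q : Polynomial (RatFunc ℂ) := F.map A with hQdef
  have hQirr : Irreducible Q :=
    hFprim.irreducible_iff_irreducible_map_fraction_map.mp hFirr
  have hcompA : A.comp (Polynomial.C) = (RatFunc.C : ℂ →+* RatFunc ℂ) :=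
    RingHom.ext fun c => RatFunc.algebraMap_C c
  have hAX : A Polynomial.X = RatFunc.X := RatFunc.algebraMap_X
  have hQ : Q = g.map (RatFunc.C (K := ℂ)) * C RatFunc.X - f.map (RatFunc.C (K := ℂ)) := by
    rw [hQdef, hF]
    rw [Polynomial.map_sub, Polynomial.map_mul, Polynomial.map_C, Polynomial.map_map,
      Polynomial.map_map, hcompA, hAX]
  set ρ := algebraMap ℂ K with hρdef
  set P' : K := ⟨P, hPmem⟩ with hP'def
  set q : Polynomial K := Q.map (e : RatFunc ℂ →+* K) with hqdef
  have hqirr : Irreducible q := by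
    have h : Irreducible (Polynomial.mapEquiv e Q) :=
      (MulEquiv.irreducible_iff (Polynomial.mapEquiv e)).mpr hQirr
    simpa [Polynomial.mapEquiv] using h
  have hcompE : ((e : RatFunc ℂ →+* K)).comp (RatFunc.C : ℂ →+* RatFunc ℂ) = ρ :=
    RingHom.ext fun c => heC c
  have heX' : (e : RatFunc ℂ →+* K) RatFunc.X = P' := heX
  have hq : q = g.map ρ * C P' - f.map ρ := by
    rw [hqdef, hQ, Polynomial.map_sub, Polynomial.map_mul, Polynomial.map_C,
      Polynomial.map_map, Polynomial.map_map, hcompE, heX']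
  -- `X` is a root of `q`
  have haevalg : ∀ p : Polynomial ℂ,
      Polynomial.aeval ((RatFunc.X : RatFunc ℂ)) p = algebraMap (Polynomial ℂ) (RatFunc ℂ) p := by
    intro p
    have h : (Polynomial.aeval (RatFunc.X : RatFunc ℂ) : Polynomial ℂ →ₐ[ℂ] RatFunc ℂ)
        = IsScalarTower.toAlgHom ℂ (Polynomial ℂ) (RatFunc ℂ) :=
      Polynomial.algHom_ext (by simp [RatFunc.algebraMap_X])
    exact DFunLike.congr_fun h p
  have haev : Polynomial.aeval ((RatFunc.X : RatFunc ℂ)) q = 0 := by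
    rw [hq, map_sub, map_mul, Polynomial.aeval_C,
      Polynomial.aeval_map_algebraMap, Polynomial.aeval_map_algebraMap,
      haevalg, haevalg]
    have hPalg : (algebraMap K (RatFunc ℂ)) P' = P := rfl
    have hg' : (algebraMap (Polynomial ℂ) (RatFunc ℂ)) g ≠ 0 := RatFunc.algebraMap_ne_zero hg0
    have hPfg : P * (algebraMap (Polynomial ℂ) (RatFunc ℂ)) g
        = (algebraMap (Polynomial ℂ) (RatFunc ℂ)) f := by
      conv_lhs => rw [← P.num_div_denom]
      exact div_mul_cancel₀ _ hg'
    rw [hPalg, sub_eq_zero, mul_comm, hPfg]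
  -- coefficients and degree of `q`
  have hρinj : Function.Injective ρ := (algebraMap ℂ K).injective
  have hP'0 : P' ≠ 0 := by
    intro h
    exact hP0 (congrArg Subtype.val h)
  have hcoeffq : ∀ i, q.coeff i = ρ (g.coeff i) * P' - ρ (f.coeff i) := by
    intro i
    rw [hq]
    simp [coeff_sub, Polynomial.coeff_mul_C, Polynomial.coeff_map]
  have hPneC : ∀ c : ℂ, P' ≠ ρ c := by
    intro c h
    refine hP c ?_
    have h2 := congrArg (algebraMap K (RatFunc ℂ)) h
    have h3 : (algebraMap K (RatFunc ℂ)) (ρ c) = algebraMap ℂ (RatFunc ℂ) c :=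
      (IsScalarTower.algebraMap_apply ℂ K (RatFunc ℂ) c).symm
    rw [h3, RatFunc.algebraMap_eq_C] at h2
    exact h2
  have hlead : q.coeff n ≠ 0 := by
    rw [hcoeffq]
    rcases lt_trichotomy f.natDegree g.natDegree with h | h | h
    · have hn : n = g.natDegree := max_eq_right h.le
      rw [hn, Polynomial.coeff_eq_zero_of_natDegree_lt h, map_zero, sub_zero]
      refine mul_ne_zero ((map_ne_zero_iff ρ hρinj).mpr ?_) hP'0
      exact fun hc => hg0 (Polynomial.leadingCoeff_eq_zero.mp hc)
    · have hn : n = g.natDegree := by rw [hndef, h, max_self]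
      intro hc
      rw [sub_eq_zero] at hc
      have hgn : g.coeff n ≠ 0 := by
        rw [hn]
        exact fun hcc => hg0 (Polynomial.leadingCoeff_eq_zero.mp hcc)
      have hρgn : ρ (g.coeff n) ≠ 0 := (map_ne_zero_iff ρ hρinj).mpr hgn
      refine hPneC (f.coeff n / g.coeff n) ?_
      rw [map_div₀]
      rw [eq_div_iff hρgn, mul_comm]
      exact hc
    · have hn : n = f.natDegree := max_eq_left h.le
      rw [hn, Polynomial.coeff_eq_zero_of_natDegree_lt h, map_zero, zero_mul, zero_sub,
        neg_ne_zero]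
      refine (map_ne_zero_iff ρ hρinj).mpr ?_
      exact fun hc => hf0 (Polynomial.leadingCoeff_eq_zero.mp hc)
  have hqne : q ≠ 0 := fun h => hlead (by rw [h, Polynomial.coeff_zero])
  have hdegle : q.natDegree ≤ n := by
    rw [hq]
    refine le_trans (Polynomial.natDegree_sub_le _ _) (max_le ?_ ?_)
    · refine le_trans (Polynomial.natDegree_mul_le) ?_
      simp only [Polynomial.natDegree_C, add_zero]
      exact le_trans (Polynomial.natDegree_map_le) (le_max_right _ _)
    · exact le_trans (Polynomial.natDegree_map_le) (le_max_left _ _)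
  have hdeg : q.natDegree = n :=
    le_antisymm hdegle (Polynomial.le_natDegree_of_ne_zero hlead)
  -- monic rescaling and the minimal polynomial
  set mq : Polynomial K := q * Polynomial.C q.leadingCoeff⁻¹ with hmqdef
  have hlcne : q.leadingCoeff ≠ 0 := Polynomial.leadingCoeff_ne_zero.mpr hqne
  have hCu : IsUnit (Polynomial.C q.leadingCoeff⁻¹) :=
    Polynomial.isUnit_C.mpr (isUnit_iff_ne_zero.mpr (inv_ne_zero hlcne))
  have hmon : mq.Monic := Polynomial.monic_mul_leadingCoeff_inv hqne
  have hmirr : Irreducible mq :=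
    (associated_mul_unit_right q _ hCu).irreducible hqirr
  have hmaev : Polynomial.aeval ((RatFunc.X : RatFunc ℂ)) mq = 0 := by
    rw [hmqdef, map_mul, haev, zero_mul]
  have hmin : minpoly K (RatFunc.X : RatFunc ℂ) = mq :=
    (minpoly.eq_of_irreducible_of_monic hmirr hmaev hmon).symm
  have hintX : IsIntegral K (RatFunc.X : RatFunc ℂ) := ⟨mq, hmon, hmaev⟩
  have hmdeg : mq.natDegree = n := by
    rw [hmqdef, Polynomial.natDegree_mul hqne (Polynomial.C_ne_zero.mpr (inv_ne_zero hlcne)),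
      Polynomial.natDegree_C, add_zero, hdeg]
  -- `RatFunc ℂ = K(X)`
  have hmemX : ∀ p : Polynomial ℂ,
      algebraMap (Polynomial ℂ) (RatFunc ℂ) p ∈ IntermediateField.adjoin K {(RatFunc.X : RatFunc ℂ)} := by
    intro p
    have hCmem : ∀ c : ℂ, RatFunc.C c ∈ IntermediateField.adjoin K {(RatFunc.X : RatFunc ℂ)} := by
      intro c
      have h2 : RatFunc.C c = algebraMap K (RatFunc ℂ) (ρ c) := by
        rw [show (algebraMap K (RatFunc ℂ)) (ρ c) = algebraMap ℂ (RatFunc ℂ) c from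
          (IsScalarTower.algebraMap_apply ℂ K (RatFunc ℂ) c).symm, RatFunc.algebraMap_eq_C]
      rw [h2]
      exact IntermediateField.algebraMap_mem _ _
    induction p using Polynomial.induction_on with
    | C a => rw [RatFunc.algebraMap_C]; exact hCmem a
    | add p1 p2 hp1 hp2 => rw [map_add]; exact add_mem hp1 hp2
    | monomial m a _ =>
      rw [map_mul, map_pow, RatFunc.algebraMap_C, RatFunc.algebraMap_X]
      exact mul_mem (hCmem a)
        (pow_mem (IntermediateField.subset_adjoin K {(RatFunc.X : RatFunc ℂ)} (Set.mem_singleton _)) _)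
  have htop : IntermediateField.adjoin K {(RatFunc.X : RatFunc ℂ)} = ⊤ := by
    rw [eq_top_iff]
    intro r _
    rw [← r.num_div_denom]
    exact div_mem (hmemX _) (hmemX _)
  have eqv : ↥(IntermediateField.adjoin K {(RatFunc.X : RatFunc ℂ)}) ≃ₗ[K] RatFunc ℂ :=
    ((IntermediateField.equivOfEq htop).trans IntermediateField.topEquiv).toLinearEquiv
  rw [← eqv.finrank_eq, IntermediateField.adjoin.finrank hintX, hmin, hmdeg]
end

section
/- Let n ≥ 2 and let G be a subgroup of the symmetric group on Fin n whose natural action on Fin n is doubly transitive. Let a, v : Fin n → ℂ be vectors such that a is not constant (there exist indices i, j with a(i) ≠ a(j)). Suppose that for every σ ∈ G one has ∑_{i} a(i) · v(σ(i)) = 0. Then v is constant, i.e. v(i) = v(j) for all i, j. -/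
open Finset

/-- Lemma 2 of Pakovich, "On the polynomial moment problem" (linear-algebra
core): if `G ≤ Sym(Fin n)` is doubly transitive, `a` is a nonconstant vector
and `∑ i, a i * v (σ i) = 0` for every `σ ∈ G`, then `v` is constant. -/
theorem doubly_transitive_vanishing_sums_const
    (n : ℕ) (hn : 2 ≤ n) (G : Subgroup (Equiv.Perm (Fin n)))
    (hG : ∀ x₁ x₂ y₁ y₂ : Fin n, x₁ ≠ x₂ → y₁ ≠ y₂ →
      ∃ σ ∈ G, σ x₁ = y₁ ∧ σ x₂ = y₂)
    (a v : Fin n → ℂ) (ha : ∃ i j : Fin n, a i ≠ a j)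
    (hsum : ∀ σ ∈ G, ∑ i : Fin n, a i * v (σ i) = 0) :
    ∀ i j : Fin n, v i = v j := by
  classical
  haveI : Nontrivial (Fin n) := Fin.nontrivial_iff_two_le.mpr hn
  set A := ∑ k, a k with hA
  set T := ∑ k, v k with hT
  have hsplit : ∀ (w : Fin n) (f : Fin n → ℂ),
      ∑ z : Fin n, f z = f w + ∑ z ∈ Finset.univ.erase w, f z := by
    intro w f
    rw [Finset.add_sum_erase _ f (Finset.mem_univ w)]
  obtain ⟨i₀, hi₀⟩ : ∃ i₀, (n : ℂ) * a i₀ ≠ A := by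
    by_contra h
    push_neg at h
    obtain ⟨i, j, hij⟩ := ha
    exact hij (mul_left_cancel₀ (Nat.cast_ne_zero.mpr (by omega)) ((h i).trans (h j).symm))
  set GS : Finset (Equiv.Perm (Fin n)) := Finset.univ.filter (· ∈ G) with hGS
  have hmemGS : ∀ σ : Equiv.Perm (Fin n), σ ∈ GS ↔ σ ∈ G := by
    intro σ; simp [hGS]
  have htrans : ∀ x y : Fin n, ∃ σ ∈ G, σ x = y := by
    intro x y
    obtain ⟨x', hx'⟩ := exists_ne x
    obtain ⟨y', hy'⟩ := exists_ne y
    obtain ⟨σ, hσG, h1, _⟩ := hG x x' y y' hx'.symm hy'.symm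
    exact ⟨σ, hσG, h1⟩
  -- the key claim: for every x, a linear relation holds
  have key : ∀ x : Fin n,
      ((n : ℂ) - 1) * a i₀ * v x + (A - a i₀) * (T - v x) = 0 := by
    intro x
    set Sx : Finset (Equiv.Perm (Fin n)) := GS.filter (fun σ => σ i₀ = x) with hSx
    have hSxmem : ∀ σ, σ ∈ Sx ↔ σ ∈ G ∧ σ i₀ = x := by
      intro σ; simp [hSx, hmemGS σ]
    have hNpos : 0 < Sx.card := by
      obtain ⟨σ, hσG, hσx⟩ := htrans i₀ x
      exact Finset.card_pos.mpr ⟨σ, (hSxmem σ).mpr ⟨hσG, hσx⟩⟩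
    -- fiber counting for i ≠ i₀
    have fiber : ∀ i : Fin n, i ≠ i₀ →
        ((n : ℂ) - 1) * (∑ σ ∈ Sx, v (σ i)) = (Sx.card : ℂ) * (T - v x) := by
      intro i hi
      set c : Fin n → ℕ := fun z => (Sx.filter (fun σ => σ i = z)).card with hc
      have hcx : c x = 0 := by
        rw [hc]
        simp only [Finset.card_eq_zero, Finset.filter_eq_empty_iff]
        intro σ hσ
        have h1 : σ i₀ = x := ((hSxmem σ).mp hσ).2
        intro h2
        exact hi (σ.injective (h2.trans h1.symm))
      obtain ⟨z₀, hz₀⟩ := exists_ne x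
      have hcz : ∀ z : Fin n, z ≠ x → c z = c z₀ := by
        intro z hz
        obtain ⟨τ, hτG, hτx, hτz⟩ := hG x z x z₀ (Ne.symm hz) (Ne.symm hz₀)
        have hτx' : τ⁻¹ x = x := (Equiv.Perm.inv_eq_iff_eq).mpr hτx.symm
        have hτz' : τ⁻¹ z₀ = z := (Equiv.Perm.inv_eq_iff_eq).mpr hτz.symm
        rw [hc]
        apply Finset.card_bij' (fun σ _ => τ * σ) (fun σ _ => τ⁻¹ * σ)
        · intro σ hσ
          simp only [Finset.mem_filter] at hσ ⊢
          obtain ⟨hσS, hσi⟩ := hσ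
          obtain ⟨hσG', hσi₀⟩ := (hSxmem σ).mp hσS
          exact ⟨(hSxmem _).mpr ⟨mul_mem hτG hσG',
            by simp [Equiv.Perm.mul_apply, hσi₀, hτx]⟩,
            by simp [Equiv.Perm.mul_apply, hσi, hτz]⟩
        · intro σ hσ
          simp only [Finset.mem_filter] at hσ ⊢
          obtain ⟨hσS, hσi⟩ := hσ
          obtain ⟨hσG', hσi₀⟩ := (hSxmem σ).mp hσS
          exact ⟨(hSxmem _).mpr ⟨mul_mem (inv_mem hτG) hσG',
            by simp [Equiv.Perm.mul_apply, hσi₀, hτx']⟩,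
            by simp [Equiv.Perm.mul_apply, hσi, hτz']⟩
        · intro σ _; simp [← mul_assoc]
        · intro σ _; simp [← mul_assoc]
      have hsum1 : ∑ σ ∈ Sx, v (σ i) = ∑ z : Fin n, (c z : ℂ) * v z := by
        have hfib := Finset.sum_fiberwise_of_maps_to (s := Sx)
          (t := (Finset.univ : Finset (Fin n))) (g := fun σ => σ i)
          (fun σ _ => Finset.mem_univ _) (fun σ => v (σ i))
        rw [← hfib]
        refine Finset.sum_congr rfl fun z _ => ?_
        calc ∑ σ ∈ Sx.filter (fun σ => σ i = z), v (σ i)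
            = ∑ σ ∈ Sx.filter (fun σ => σ i = z), v z :=
              Finset.sum_congr rfl fun σ hσ => by rw [(Finset.mem_filter.mp hσ).2]
          _ = (c z : ℂ) * v z := by rw [Finset.sum_const, nsmul_eq_mul]
      have hcard : Sx.card = ∑ z : Fin n, c z :=
        Finset.card_eq_sum_card_fiberwise (fun σ _ => Finset.mem_univ (σ i))
      have hcardc : (Sx.card : ℂ) = ((n : ℂ) - 1) * (c z₀ : ℂ) := by
        have h1 : (Sx.card : ℂ) = ∑ z : Fin n, (c z : ℂ) := by
          rw [hcard, Nat.cast_sum]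
        rw [h1, hsplit x (fun z => (c z : ℂ)), hcx]
        rw [Finset.sum_congr rfl (fun z hz => by
          rw [hcz z (Finset.mem_erase.mp hz).1])]
        rw [Finset.sum_const]
        simp only [Nat.cast_zero, zero_add, nsmul_eq_mul]
        congr 1
        rw [Finset.card_erase_of_mem (Finset.mem_univ x), Finset.card_univ, Fintype.card_fin]
        rw [Nat.cast_sub (by omega : 1 ≤ n), Nat.cast_one]
      have hsumv : ∑ σ ∈ Sx, v (σ i) = (c z₀ : ℂ) * (T - v x) := by
        rw [hsum1, hsplit x (fun z => (c z : ℂ) * v z), hcx]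
        rw [Finset.sum_congr rfl (fun z hz => by
          rw [hcz z (Finset.mem_erase.mp hz).1])]
        simp only [Nat.cast_zero, zero_mul, zero_add]
        rw [← Finset.mul_sum]
        congr 1
        have hTv : T = v x + ∑ z ∈ Finset.univ.erase x, v z := by
          rw [hT]; exact hsplit x v
        linear_combination -hTv
      rw [hsumv, hcardc]; ring
    -- value of the i₀-sum
    have hSi₀ : ∑ σ ∈ Sx, v (σ i₀) = (Sx.card : ℂ) * v x := by
      rw [Finset.sum_congr rfl (fun σ hσ => by rw [((hSxmem σ).mp hσ).2]),
        Finset.sum_const, nsmul_eq_mul]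
    -- sum the hypothesis over Sx
    have h0 : ∑ σ ∈ Sx, ∑ i : Fin n, a i * v (σ i) = 0 :=
      Finset.sum_eq_zero fun σ hσ => hsum σ ((hSxmem σ).mp hσ).1
    rw [Finset.sum_comm] at h0
    have h0' : ∑ i : Fin n, a i * ∑ σ ∈ Sx, v (σ i) = 0 := by
      rw [← h0]
      exact Finset.sum_congr rfl fun i _ => Finset.mul_sum _ _ _
    have h1 : ∑ i : Fin n, ((n:ℂ)-1) * (a i * ∑ σ ∈ Sx, v (σ i)) = 0 := by
      rw [← Finset.mul_sum, h0', mul_zero]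
    rw [hsplit i₀ (fun i => ((n:ℂ)-1) * (a i * ∑ σ ∈ Sx, v (σ i)))] at h1
    rw [Finset.sum_congr rfl (fun i hi => show
        ((n:ℂ)-1) * (a i * ∑ σ ∈ Sx, v (σ i)) = a i * ((Sx.card : ℂ) * (T - v x)) by
      rw [show ((n:ℂ)-1) * (a i * ∑ σ ∈ Sx, v (σ i))
          = a i * (((n:ℂ)-1) * ∑ σ ∈ Sx, v (σ i)) by ring,
        fiber i (Finset.mem_erase.mp hi).1])] at h1
    rw [← Finset.sum_mul] at h1
    have hAe : ∑ i ∈ Finset.univ.erase i₀, a i = A - a i₀ := by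
      have hAv : A = a i₀ + ∑ z ∈ Finset.univ.erase i₀, a z := by
        rw [hA]; exact hsplit i₀ a
      linear_combination -hAv
    rw [hAe, hSi₀] at h1
    have h2 : (Sx.card : ℂ) *
        (((n : ℂ) - 1) * a i₀ * v x + (A - a i₀) * (T - v x)) = 0 := by
      linear_combination h1
    have hNne : (Sx.card : ℂ) ≠ 0 := Nat.cast_ne_zero.mpr hNpos.ne'
    exact (mul_eq_zero.mp h2).resolve_left hNne
  intro i j
  have hkey : ((n : ℂ) * a i₀ - A) * (v i - v j) = 0 := by
    linear_combination key i - key j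
  rcases mul_eq_zero.mp hkey with h | h
  · exact absurd (sub_eq_zero.mp h) hi₀
  · exact sub_eq_zero.mp h
end

section
/- Let n ≥ 2 and let G be a subgroup of the symmetric group on Fin n, acting on ℂⁿ = (Fin n → ℂ) by permuting coordinates: σ sends the vector (a₁, ..., a_n) to (a_{σ(1)}, ..., a_{σ(n)}). Then the natural action of G on Fin n is doubly transitive if and only if the only subspaces of ℂⁿ invariant under this G-action are the zero subspace, the whole space ℂⁿ, the line E spanned by the all-ones vector (1, 1, ..., 1), and its orthogonal complement E^⊥ = {x ∈ ℂⁿ : ∑_i x_i = 0}. -/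
open Finset Matrix


theorem core_lemma (n : ℕ) (hn : 2 ≤ n) (G : Subgroup (Equiv.Perm (Fin n)))
    (h : ∀ V : Submodule ℂ (Fin n → ℂ),
        (∀ σ ∈ G, ∀ a ∈ V, (fun i => a (σ i)) ∈ V) →
        V = ⊥ ∨ V = ⊤ ∨
          V = Submodule.span ℂ {(fun _ => (1 : ℂ) : Fin n → ℂ)} ∨
          V = LinearMap.ker (∑ i : Fin n, LinearMap.proj (R := ℂ) (φ := fun _ : Fin n => ℂ) i))
    (B : Matrix (Fin n) (Fin n) ℂ) (d : ℂ)
    (hBinv : ∀ σ ∈ G, ∀ i j, B (σ i) (σ j) = B i j)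
    (hrow : ∀ i, ∑ j, B i j = d)
    (hcol : ∀ j, ∑ i, B i j = d)
    (htr : B.trace = 0) :
    d = 0 ∨ ((n : ℂ) - 1) * (B * B).trace = n * d ^ 2 := by
  have hn0 : (n : ℂ) ≠ 0 := Nat.cast_ne_zero.mpr (by omega)
  set f : Module.End ℂ (Fin n → ℂ) := Matrix.toLinAlgEquiv' B with hfdef
  have hfapp : ∀ x, f x = B *ᵥ x := fun x => Matrix.toLinAlgEquiv'_apply B x
  set one : Fin n → ℂ := fun _ => 1 with honedef
  have hWinv : ∀ μ : ℂ, ∀ σ ∈ G, ∀ a ∈ f.maxGenEigenspace μ,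
      (fun i => a (σ i)) ∈ f.maxGenEigenspace μ := by
    intro μ σ hσ a ha
    rw [Module.End.mem_maxGenEigenspace] at ha ⊢
    obtain ⟨k, hk⟩ := ha
    refine ⟨k, ?_⟩
    have hT : ∀ x : Fin n → ℂ, f (fun i => x (σ i)) = fun i => (f x) (σ i) := by
      intro x
      funext i
      rw [hfapp, hfapp]
      show ∑ j, B i j * x (σ j) = ∑ j, B (σ i) j * x j
      rw [← Equiv.sum_comp σ (fun j => B (σ i) j * x j)]
      exact Finset.sum_congr rfl fun j _ => by rw [hBinv σ hσ i j]
    have hstep : ∀ x : Fin n → ℂ, (f - μ • 1) (fun i => x (σ i))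
        = fun i => ((f - μ • 1) x) (σ i) := by
      intro x
      funext i
      simp only [LinearMap.sub_apply, LinearMap.smul_apply, Module.End.one_apply, Pi.sub_apply,
        Pi.smul_apply, congrFun (hT x) i]
    have key : ∀ (k' : ℕ) (x : Fin n → ℂ), ((f - μ • 1) ^ k') (fun i => x (σ i))
        = fun i => (((f - μ • 1) ^ k') x) (σ i) := by
      intro k'
      induction k' with
      | zero => intro x; simp
      | succ m ih =>
        intro x
        have hx : ((f - μ • 1) ^ (m+1)) x = (f - μ • 1) (((f - μ • 1) ^ m) x) := by
          rw [pow_succ', Module.End.mul_apply]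
        rw [hx, pow_succ', Module.End.mul_apply, ih x, hstep]
    rw [key k a, hk]
    rfl
  have hW := fun μ : ℂ => h _ (hWinv μ)
  have hfone : f one = d • one := by
    funext i
    rw [hfapp]
    show ∑ j, B i j * 1 = d • (1:ℂ)
    simp [hrow i]
  have hpowone : ∀ (μ : ℂ) (k : ℕ), ((f - μ • 1) ^ k) one = ((d - μ) ^ k) • one := by
    intro μ k
    induction k with
    | zero => simp
    | succ m ih =>
      rw [pow_succ', Module.End.mul_apply, ih, _root_.map_smul, LinearMap.sub_apply, hfone,
        LinearMap.smul_apply, Module.End.one_apply, ← sub_smul, smul_smul, ← pow_succ]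
  have hone_ne : one ≠ 0 := by
    intro hcon
    have := congrFun hcon ⟨0, by omega⟩
    simp [honedef] at this
  have eigone : ∀ μ : ℂ, (∃ k : ℕ, ((f - μ • 1) ^ k) one = 0) → μ = d := by
    rintro μ ⟨k, hk⟩
    rw [hpowone μ k] at hk
    rcases smul_eq_zero.mp hk with hz | hz
    · exact (sub_eq_zero.mp (pow_eq_zero_iff'.mp hz).1).symm
    · exact absurd hz hone_ne
  -- trace of smul-identity
  have htrone : (1 : Matrix (Fin n) (Fin n) ℂ).trace = (n : ℂ) := by
    rw [Matrix.trace_one]; simp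
  by_cases htop : ∃ μ, f.maxGenEigenspace μ = ⊤
  · left
    obtain ⟨μ, hμ⟩ := htop
    have hone_mem : one ∈ f.maxGenEigenspace μ := hμ ▸ Submodule.mem_top
    rw [Module.End.mem_maxGenEigenspace] at hone_mem
    have hμd : μ = d := eigone μ hone_mem
    set N := f.maxGenEigenspaceIndex μ with hNdef
    have hgen : f.maxGenEigenspace μ = LinearMap.ker ((f - μ • 1) ^ N) := by
      rw [Module.End.maxGenEigenspace_eq, Module.End.genEigenspace_nat]
    have hker : LinearMap.ker ((f - μ • 1) ^ N) = ⊤ := hgen ▸ hμ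
    have hzero : (f - μ • 1) ^ N = 0 := LinearMap.ker_eq_top.mp hker
    have hmat : ((B - μ • 1) ^ N : Matrix (Fin n) (Fin n) ℂ) = 0 := by
      apply Matrix.toLinAlgEquiv'.injective
      rw [map_pow, map_sub, _root_.map_smul, _root_.map_one, map_zero]
      exact hzero
    have hnil : IsNilpotent (B - μ • 1) := ⟨N, hmat⟩
    have htr0 := (Matrix.isNilpotent_trace_of_isNilpotent hnil).eq_zero
    rw [Matrix.trace_sub, htr, Matrix.trace_smul, htrone] at htr0
    have : μ * n = 0 := by
      have : (0 : ℂ) - μ • (n:ℂ) = 0 := htr0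
      simpa [smul_eq_mul] using this
    rcases mul_eq_zero.mp this with hz | hz
    · rw [← hμd, hz]
    · exact absurd hz hn0
  · push_neg at htop
    have hsup := Module.End.iSup_maxGenEigenspace_eq_top f
    have hmemK : ∀ x : Fin n → ℂ,
        x ∈ LinearMap.ker (∑ i : Fin n, LinearMap.proj (R := ℂ) (φ := fun _ : Fin n => ℂ) i)
        ↔ ∑ i, x i = 0 := by
      intro x
      simp [LinearMap.mem_ker, LinearMap.sum_apply, LinearMap.proj_apply]
    -- find β with maxGen = K
    have hβ : ∃ β : ℂ, f.maxGenEigenspace β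
        = LinearMap.ker (∑ i : Fin n, LinearMap.proj (R := ℂ) (φ := fun _ : Fin n => ℂ) i) := by
      by_contra hc
      push_neg at hc
      have hle : ∀ μ, f.maxGenEigenspace μ ≤ Submodule.span ℂ {one} := by
        intro μ
        rcases hW μ with h1 | h1 | h1 | h1
        · rw [h1]; exact bot_le
        · exact absurd h1 (htop μ)
        · rw [h1]
        · exact absurd h1 (hc μ)
      have hle2 : (⊤ : Submodule ℂ (Fin n → ℂ)) ≤ Submodule.span ℂ {one} :=
        hsup ▸ iSup_le hle
      have hmem : (Pi.single (⟨0, by omega⟩ : Fin n) (1:ℂ)) ∈ Submodule.span ℂ {one} :=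
        hle2 Submodule.mem_top
      obtain ⟨c, hc2⟩ := Submodule.mem_span_singleton.mp hmem
      have h0 := congrFun hc2 ⟨0, by omega⟩
      have h1 := congrFun hc2 ⟨1, by omega⟩
      simp only [Pi.smul_apply, honedef, smul_eq_mul, mul_one] at h0 h1
      rw [Pi.single_eq_same] at h0
      rw [Pi.single_eq_of_ne (by intro hcon; exact absurd (congrArg Fin.val hcon) (by simp)) 1] at h1
      rw [h1] at h0
      exact one_ne_zero h0.symm
    obtain ⟨β, hβ⟩ := hβ
    -- uniform annihilation exponent on K
    set N := f.maxGenEigenspaceIndex β with hNdef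
    have hKN : ∀ x, (∑ i, x i) = 0 → ((f - β • 1) ^ N) x = 0 := by
      intro x hx
      have hxmem : x ∈ f.maxGenEigenspace β := by
        rw [hβ, hmemK]; exact hx
      rw [Module.End.maxGenEigenspace_eq, Module.End.genEigenspace_nat, LinearMap.mem_ker] at hxmem
      exact hxmem
    -- the all-ones matrix and the correction matrix P
    set J : Matrix (Fin n) (Fin n) ℂ := Matrix.of (fun _ _ => (1:ℂ)) with hJdef
    set c : ℂ := (d - β) / n with hcdef
    have hcn : c * n = d - β := by
      rw [hcdef]; field_simp
    set P : Matrix (Fin n) (Fin n) ℂ := B - β • 1 - c • J with hPdef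
    have hJv : ∀ v : Fin n → ℂ, J *ᵥ v = (∑ i, v i) • one := by
      intro v
      funext i
      simp [Matrix.mulVec, dotProduct, hJdef, honedef]
    have hPv : ∀ v : Fin n → ℂ, P *ᵥ v = B *ᵥ v - β • v - ((∑ i, v i) * c) • one := by
      intro v
      rw [hPdef, Matrix.sub_mulVec, Matrix.sub_mulVec, Matrix.smul_mulVec,
        Matrix.smul_mulVec, Matrix.one_mulVec, hJv, smul_smul, mul_comm]
    have hBone : B *ᵥ one = d • one := by rw [← hfapp]; exact hfone
    have hsumone : ∑ i : Fin n, one i = (n : ℂ) := by simp [honedef]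
    have hPone : P *ᵥ one = 0 := by
      rw [hPv, hBone, hsumone, mul_comm, hcn]
      funext i
      simp [honedef]
    have hBK : ∀ v : Fin n → ℂ, ∑ i, (B *ᵥ v) i = d * ∑ i, v i := by
      intro v
      simp only [Matrix.mulVec, dotProduct]
      rw [Finset.sum_comm]
      rw [Finset.sum_congr rfl (fun j _ => by rw [← Finset.sum_mul, hcol j])]
      rw [← Finset.mul_sum]
    set g : Module.End ℂ (Fin n → ℂ) := Matrix.toLinAlgEquiv' P with hgdef
    have hgapp : ∀ x, g x = P *ᵥ x := fun x => Matrix.toLinAlgEquiv'_apply P x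
    have hgK : ∀ v : Fin n → ℂ, ∑ i, v i = 0 →
        g v = (f - β • 1) v ∧ ∑ i, ((f - β • 1) v) i = 0 := by
      intro v hv
      constructor
      · rw [hgapp, hPv, hv, zero_mul, zero_smul, sub_zero, LinearMap.sub_apply,
          LinearMap.smul_apply, Module.End.one_apply, hfapp]
      · simp only [LinearMap.sub_apply, LinearMap.smul_apply, Module.End.one_apply, Pi.sub_apply,
          Pi.smul_apply, smul_eq_mul]
        rw [Finset.sum_sub_distrib, hfapp, hBK v, ← Finset.mul_sum, hv, mul_zero, mul_zero,
          sub_zero]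
    have hgpowK : ∀ (m : ℕ) (v : Fin n → ℂ), ∑ i, v i = 0 →
        (g ^ m) v = ((f - β • 1) ^ m) v ∧ ∑ i, (((f - β • 1) ^ m) v) i = 0 := by
      intro m
      induction m with
      | zero => intro v hv; constructor <;> simp [hv]
      | succ k ih =>
        intro v hv
        obtain ⟨ih1, ih2⟩ := ih v hv
        obtain ⟨h1, h2⟩ := hgK (((f - β • 1) ^ k) v) ih2
        constructor
        · rw [pow_succ', Module.End.mul_apply, ih1, h1, ← Module.End.mul_apply, ← pow_succ']
        · rw [pow_succ', Module.End.mul_apply]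
          exact h2
    have hgone : g one = 0 := by rw [hgapp, hPone]
    have hgnil : g ^ (N + 1) = 0 := by
      apply LinearMap.ext
      intro v
      have hsplit : v = ((∑ i, v i) / n) • one + (v - ((∑ i, v i) / n) • one) := by ring_nf
      have hw : ∑ i, (v - ((∑ i, v i) / n) • one) i = 0 := by
        simp only [Pi.sub_apply, Pi.smul_apply, honedef, smul_eq_mul, mul_one]
        rw [Finset.sum_sub_distrib, Finset.sum_const]
        simp
        field_simp
        ring
      have h1 : (g ^ (N+1)) one = 0 := by
        rw [pow_succ, Module.End.mul_apply, hgone, map_zero]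
      have h2 : (g ^ (N+1)) (v - ((∑ i, v i) / n) • one) = 0 := by
        rw [(hgpowK (N+1) _ hw).1, pow_succ', Module.End.mul_apply,
          hKN _ hw, map_zero]
      calc (g ^ (N+1)) v
          = (g ^ (N+1)) (((∑ i, v i) / n) • one + (v - ((∑ i, v i) / n) • one)) := by
            rw [← hsplit]
        _ = ((∑ i, v i) / n) • (g ^ (N+1)) one + (g ^ (N+1)) (v - ((∑ i, v i) / n) • one) := by
            rw [map_add, _root_.map_smul]
        _ = 0 := by rw [h1, h2, smul_zero, zero_add]
    have hPN : P ^ (N + 1) = 0 := by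
      apply Matrix.toLinAlgEquiv'.injective
      rw [map_pow, map_zero]
      exact hgnil
    have hPnilmat : IsNilpotent P := ⟨N + 1, hPN⟩
    have hPPnil : IsNilpotent (P * P) := by
      refine ⟨N + 1, ?_⟩
      have h2 : (P * P) ^ (N + 1) = P ^ (2 * (N + 1)) := by rw [← pow_two, ← pow_mul]
      rw [h2, two_mul, pow_add, hPN, zero_mul]
    have htrP := (Matrix.isNilpotent_trace_of_isNilpotent hPnilmat).eq_zero
    have htrPP := (Matrix.isNilpotent_trace_of_isNilpotent hPPnil).eq_zero
    have htrJ : J.trace = (n : ℂ) := by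
      simp [Matrix.trace, Matrix.diag, hJdef]
    have htrBJ : (B * J).trace = n * d := by
      simp only [Matrix.trace, Matrix.diag, Matrix.mul_apply, hJdef, Matrix.of_apply, mul_one]
      rw [Finset.sum_congr rfl fun i _ => hrow i]
      simp [mul_comm]
    have htrJB : (J * B).trace = n * d := by
      simp only [Matrix.trace, Matrix.diag, Matrix.mul_apply, hJdef, Matrix.of_apply, one_mul]
      rw [Finset.sum_congr rfl fun i _ => hcol i]
      simp [mul_comm]
    have htrJJ : (J * J).trace = (n:ℂ) * n := by
      simp only [Matrix.trace, Matrix.diag, Matrix.mul_apply, hJdef, Matrix.of_apply, mul_one]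
      simp [Finset.sum_const]
    have htrPval : P.trace = - (β * n) - c * n := by
      rw [hPdef, Matrix.trace_sub, Matrix.trace_sub, Matrix.trace_smul, Matrix.trace_smul,
        htrone, htrJ, htr]
      simp only [smul_eq_mul]
      ring
    have e1 : β * n + c * n = 0 := by
      rw [htrPval] at htrP
      linear_combination - htrP
    have hPB : P * B = B * B - β • B - c • (J * B) := by
      rw [hPdef, Matrix.sub_mul, Matrix.sub_mul, Matrix.smul_mul, Matrix.smul_mul,
        Matrix.one_mul]
    have hPJ : P * J = B * J - β • J - c • (J * J) := by
      rw [hPdef, Matrix.sub_mul, Matrix.sub_mul, Matrix.smul_mul, Matrix.smul_mul,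
        Matrix.one_mul]
    have hPP : P * P = P * B - β • P - c • (P * J) := by
      calc P * P = P * (B - β • 1 - c • J) := by rw [← hPdef]
        _ = P * B - β • P - c • (P * J) := by
            rw [Matrix.mul_sub, Matrix.mul_sub, Matrix.mul_smul, Matrix.mul_smul, Matrix.mul_one]
    have htrPP2 : (P * P).trace = (B * B).trace - c * ((n:ℂ) * d)
        - β * P.trace - c * ((n:ℂ) * d - β * (n:ℂ) - c * ((n:ℂ) * n)) := by
      rw [hPP, hPB, hPJ]
      simp only [Matrix.trace_sub, Matrix.trace_smul, smul_eq_mul, htr, htrBJ, htrJB, htrJJ, htrJ]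
      ring
    have hc1 : c = -β := by
      have h0 : (c + β) * (n:ℂ) = 0 := by linear_combination e1
      rcases mul_eq_zero.mp h0 with h1 | h1
      · linear_combination h1
      · exact absurd h1 hn0
    have hd1 : d = β - n * β := by
      rw [hc1] at hcn
      linear_combination - hcn
    right
    rw [htrPP, htrP, hc1, hd1] at htrPP2
    rw [hd1]
    linear_combination (-((n:ℂ) - 1)) * htrPP2

theorem apply_core_real (n : ℕ) (hn : 2 ≤ n) (G : Subgroup (Equiv.Perm (Fin n)))
    (h : ∀ V : Submodule ℂ (Fin n → ℂ),
        (∀ σ ∈ G, ∀ a ∈ V, (fun i => a (σ i)) ∈ V) →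
        V = ⊥ ∨ V = ⊤ ∨
          V = Submodule.span ℂ {(fun _ => (1 : ℂ) : Fin n → ℂ)} ∨
          V = LinearMap.ker (∑ i : Fin n, LinearMap.proj (R := ℂ) (φ := fun _ : Fin n => ℂ) i))
    (X : Matrix (Fin n) (Fin n) ℝ) (dr : ℝ)
    (hXinv : ∀ σ ∈ G, ∀ i j, X (σ i) (σ j) = X i j)
    (hrow : ∀ i, ∑ j, X i j = dr)
    (hcol : ∀ j, ∑ i, X i j = dr)
    (htrace : X.trace = 0) :
    dr = 0 ∨ ((n : ℝ) - 1) * (X * X).trace = n * dr ^ 2 := by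
  set B : Matrix (Fin n) (Fin n) ℂ := X.map (algebraMap ℝ ℂ) with hB
  have hBapp : ∀ i j, B i j = ((X i j : ℝ) : ℂ) := by
    intro i j; simp [hB, Matrix.map_apply]
  have hBinv : ∀ σ ∈ G, ∀ i j, B (σ i) (σ j) = B i j := by
    intro σ hσ i j; rw [hBapp, hBapp, hXinv σ hσ i j]
  have hBrow : ∀ i, ∑ j, B i j = ((dr : ℝ) : ℂ) := by
    intro i
    rw [← hrow i]
    push_cast
    exact Finset.sum_congr rfl fun j _ => hBapp i j
  have hBcol : ∀ j, ∑ i, B i j = ((dr : ℝ) : ℂ) := by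
    intro j
    rw [← hcol j]
    push_cast
    exact Finset.sum_congr rfl fun i _ => hBapp i j
  have hBtr : B.trace = 0 := by
    have : B.trace = ((X.trace : ℝ) : ℂ) := by
      simp only [Matrix.trace, Matrix.diag]
      push_cast
      exact Finset.sum_congr rfl fun i _ => hBapp i i
    rw [this, htrace, Complex.ofReal_zero]
  have hBB : (B * B).trace = (((X * X).trace : ℝ) : ℂ) := by
    have hmul : B * B = (X * X).map (algebraMap ℝ ℂ) := (Matrix.map_mul).symm
    rw [hmul]
    simp only [Matrix.trace, Matrix.diag, Matrix.map_apply]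
    push_cast
    simp [Complex.coe_algebraMap]
  rcases core_lemma n hn G h B ((dr : ℝ) : ℂ) hBinv hBrow hBcol hBtr with h1 | h1
  · left; exact_mod_cast h1
  · right
    rw [hBB] at h1
    exact_mod_cast h1

set_option maxHeartbeats 4000000 in
theorem rev_dir (n : ℕ) (hn : 2 ≤ n) (G : Subgroup (Equiv.Perm (Fin n)))
    (h : ∀ V : Submodule ℂ (Fin n → ℂ),
        (∀ σ ∈ G, ∀ a ∈ V, (fun i => a (σ i)) ∈ V) →
        V = ⊥ ∨ V = ⊤ ∨
          V = Submodule.span ℂ {(fun _ => (1 : ℂ) : Fin n → ℂ)} ∨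
          V = LinearMap.ker (∑ i : Fin n, LinearMap.proj (R := ℂ) (φ := fun _ : Fin n => ℂ) i)) :
    ∀ x₁ x₂ y₁ y₂ : Fin n, x₁ ≠ x₂ → y₁ ≠ y₂ →
        ∃ σ ∈ G, σ x₁ = y₁ ∧ σ x₂ = y₂ := by
  classical
  have hn0 : (n : ℂ) ≠ 0 := Nat.cast_ne_zero.mpr (by omega)
  -- Step 1 : G is transitive
  have htrans : ∀ p q : Fin n, ∃ σ ∈ G, σ p = q := by
    intro p q
    by_contra hc
    push_neg at hc
    set O : Set (Fin n) := {r | ∃ σ ∈ G, σ p = r} with hO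
    have hpO : p ∈ O := ⟨1, G.one_mem, rfl⟩
    have hqO : q ∉ O := by rintro ⟨σ, hσ, hσp⟩; exact hc σ hσ hσp
    set V : Submodule ℂ (Fin n → ℂ) :=
      { carrier := {x | ∀ j, j ∉ O → x j = 0}
        add_mem' := fun hx hy j hj => by
          rw [Pi.add_apply, hx j hj, hy j hj, add_zero]
        zero_mem' := fun j hj => rfl
        smul_mem' := fun c x hx j hj => by
          rw [Pi.smul_apply, hx j hj, smul_zero] } with hV
    have hVmem : ∀ x : Fin n → ℂ, x ∈ V ↔ ∀ j, j ∉ O → x j = 0 := fun x => Iff.rfl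
    have hVinv : ∀ σ ∈ G, ∀ a ∈ V, (fun i => a (σ i)) ∈ V := by
      intro σ hσ a ha
      rw [hVmem] at ha ⊢
      intro j hj
      have hσj : σ j ∉ O := by
        rintro ⟨τ, hτ, hτp⟩
        exact hj ⟨σ⁻¹ * τ, G.mul_mem (G.inv_mem hσ) hτ, by
          simp [Equiv.Perm.mul_apply, hτp]⟩
      exact ha (σ j) hσj
    have hpq : q ≠ p := fun hcon => hqO (hcon ▸ hpO)
    have hsingle : (Pi.single p 1 : Fin n → ℂ) ∈ V := by
      rw [hVmem]
      intro j hj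
      exact Pi.single_eq_of_ne (fun hcon => hj (by rw [hcon]; exact hpO)) 1
    rcases h V hVinv with h1 | h1 | h1 | h1
    · rw [h1, Submodule.mem_bot] at hsingle
      have := congrFun hsingle p
      simp at this
    · have hqmem : (Pi.single q 1 : Fin n → ℂ) ∈ V := by
        rw [h1]; exact Submodule.mem_top
      have := (hVmem _).mp hqmem q hqO
      simp at this
    · rw [h1] at hsingle
      obtain ⟨a, ha⟩ := Submodule.mem_span_singleton.mp hsingle
      have h0 := congrFun ha p
      have h1' := congrFun ha q
      simp only [Pi.smul_apply, smul_eq_mul, mul_one] at h0 h1'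
      rw [Pi.single_eq_same] at h0
      rw [Pi.single_eq_of_ne hpq] at h1'
      rw [h1'] at h0
      simp at h0
    · rw [h1, LinearMap.mem_ker] at hsingle
      simp only [LinearMap.sum_apply, LinearMap.proj_apply] at hsingle
      rw [Finset.sum_eq_single p (fun i _ hi => Pi.single_eq_of_ne hi 1)
        (fun hmem => absurd (Finset.mem_univ p) hmem)] at hsingle
      simp at hsingle
  -- Step 2: double transitivity
  intro x₁ x₂ y₁ y₂ hx hy
  by_contra hcon
  push_neg at hcon
  have hnR0 : (n : ℝ) ≠ 0 := Nat.cast_ne_zero.mpr (by omega)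
  have hnR1 : (n : ℝ) - 1 ≠ 0 := by
    have : (2 : ℝ) ≤ (n : ℝ) := by exact_mod_cast hn
    intro hcc; linarith
  set O : Set (Fin n × Fin n) := {r | ∃ σ ∈ G, σ x₁ = r.1 ∧ σ x₂ = r.2} with hO
  have hxy : (x₁, x₂) ∈ O := ⟨1, G.one_mem, rfl, rfl⟩
  have hyO : (y₁, y₂) ∉ O := by
    rintro ⟨σ, hσ, h1, h2⟩
    exact hcon σ hσ h1 h2
  have hOdiag : ∀ i, (i, i) ∉ O := by
    rintro i ⟨σ, hσ, h1, h2⟩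
    exact hx (σ.injective (h1.trans h2.symm))
  have hOinv : ∀ σ ∈ G, ∀ i j, ((σ i, σ j) ∈ O ↔ (i, j) ∈ O) := by
    intro σ hσ i j
    constructor
    · rintro ⟨τ, hτ, h1, h2⟩
      refine ⟨σ⁻¹ * τ, G.mul_mem (G.inv_mem hσ) hτ, ?_, ?_⟩ <;>
        simp [Equiv.Perm.mul_apply, h1, h2]
    · rintro ⟨τ, hτ, h1, h2⟩
      refine ⟨σ * τ, G.mul_mem hσ hτ, ?_, ?_⟩ <;>
        simp [Equiv.Perm.mul_apply, h1, h2]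
  set A : Matrix (Fin n) (Fin n) ℝ := Matrix.of (fun i j => if (i, j) ∈ O then 1 else 0) with hA
  have hA01 : ∀ i j, A i j = 0 ∨ A i j = 1 := by
    intro i j; by_cases hij : (i, j) ∈ O <;> simp [hA, hij]
  have hAnonneg : ∀ i j, 0 ≤ A i j := by
    intro i j; rcases hA01 i j with h' | h' <;> rw [h'] <;> norm_num
  have hAle : ∀ i j, A i j ≤ 1 := by
    intro i j; rcases hA01 i j with h' | h' <;> rw [h'] <;> norm_num
  have hAdiag : ∀ i, A i i = 0 := fun i => by simp [hA, hOdiag i]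
  have hAxy : A x₁ x₂ = 1 := by simp [hA, hxy]
  have hAy : A y₁ y₂ = 0 := by simp [hA, hyO]
  have hAinv : ∀ σ ∈ G, ∀ i j, A (σ i) (σ j) = A i j := by
    intro σ hσ i j
    simp only [hA, Matrix.of_apply]
    rw [if_congr (hOinv σ hσ i j) rfl rfl]
  set dn : ℝ := ∑ j, A x₁ j with hd
  have hArow : ∀ i, ∑ j, A i j = dn := by
    intro i
    obtain ⟨σ, hσ, hσp⟩ := htrans x₁ i
    rw [hd, ← hσp, ← Equiv.sum_comp σ (fun j => A (σ x₁) j)]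
    exact Finset.sum_congr rfl fun j _ => (hAinv σ hσ x₁ j)
  have hAcol : ∀ j, ∑ i, A i j = ∑ i, A i x₂ := by
    intro j
    obtain ⟨σ, hσ, hσp⟩ := htrans x₂ j
    rw [← hσp, ← Equiv.sum_comp σ (fun i => A i (σ x₂))]
    exact Finset.sum_congr rfl fun i _ => (hAinv σ hσ i x₂)
  have hcolval : ∀ j, ∑ i, A i j = dn := by
    have hdouble : ∑ i, ∑ j, A i j = ∑ j, ∑ i, A i j := Finset.sum_comm
    rw [Finset.sum_congr rfl (fun i (_ : i ∈ Finset.univ) => hArow i), Finset.sum_const,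
      Finset.card_univ, Fintype.card_fin] at hdouble
    rw [Finset.sum_congr rfl (fun j (_ : j ∈ Finset.univ) => hAcol j), Finset.sum_const,
      Finset.card_univ, Fintype.card_fin] at hdouble
    have hcol2 : ∑ i, A i x₂ = dn := by
      rw [nsmul_eq_mul, nsmul_eq_mul] at hdouble
      have := mul_left_cancel₀ hnR0 hdouble
      linarith
    intro j; rw [hAcol j, hcol2]
  have hdn1 : 1 ≤ dn := by
    rw [hd]
    calc (1:ℝ) = A x₁ x₂ := hAxy.symm
      _ ≤ ∑ j, A x₁ j := Finset.single_le_sum (fun j _ => hAnonneg x₁ j) (Finset.mem_univ x₂)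
  -- the symmetrized matrix
  set M : Matrix (Fin n) (Fin n) ℝ := A + Aᵀ with hM
  have hMapp : ∀ i j, M i j = A i j + A j i := by
    intro i j; simp [hM, Matrix.add_apply, Matrix.transpose_apply]
  have hMsymm : ∀ i j, M i j = M j i := by
    intro i j; rw [hMapp, hMapp]; ring
  have hMdiag : ∀ i, M i i = 0 := by
    intro i; rw [hMapp, hAdiag, add_zero]
  have hMrow : ∀ i, ∑ j, M i j = 2 * dn := by
    intro i
    rw [Finset.sum_congr rfl (fun j (_ : j ∈ Finset.univ) => hMapp i j),
      Finset.sum_add_distrib, hArow i, hcolval i]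
    ring
  have hMcol : ∀ j, ∑ i, M i j = 2 * dn := by
    intro j
    rw [Finset.sum_congr rfl (fun i (_ : i ∈ Finset.univ) => (hMsymm i j).trans rfl)]
    exact hMrow j
  have hMinv : ∀ σ ∈ G, ∀ i j, M (σ i) (σ j) = M i j := by
    intro σ hσ i j
    rw [hMapp, hMapp, hAinv σ hσ i j, hAinv σ hσ j i]
  have hMtr : M.trace = 0 := by
    simp only [Matrix.trace, Matrix.diag]
    exact Finset.sum_eq_zero fun i _ => hMdiag i
  rcases apply_core_real n hn G h M (2 * dn) hMinv hMrow hMcol hMtr with h1 | h1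
  · linarith
  -- trace identity for M
  have hS : (M * M).trace = ∑ i, ∑ j, (M i j) ^ 2 := by
    simp only [Matrix.trace, Matrix.diag, Matrix.mul_apply]
    refine Finset.sum_congr rfl fun i _ => Finset.sum_congr rfl fun j _ => ?_
    rw [← hMsymm i j, pow_two]
  set c : ℝ := 2 * dn / ((n : ℝ) - 1) with hcdef
  have hcval : c * ((n : ℝ) - 1) = 2 * dn := by
    rw [hcdef]; field_simp
  have key : ∑ i, ∑ j, (M i j - (if i = j then 0 else c)) ^ 2 = 0 := by
    have hterm : ∀ i j, (M i j - (if i = j then 0 else c)) ^ 2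
        = (M i j) ^ 2 - 2 * (c * M i j) + (if i = j then (0:ℝ) else c ^ 2) := by
      intro i j
      by_cases hij : i = j
      · subst hij; simp [hMdiag i]
      · simp only [if_neg hij]; ring
    have hinner : ∀ i, ∑ j, (M i j - (if i = j then 0 else c)) ^ 2
        = (∑ j, (M i j) ^ 2) - 2 * c * (2 * dn) + ((n : ℝ) * c ^ 2 - c ^ 2) := by
      intro i
      rw [Finset.sum_congr rfl (fun j (_ : j ∈ Finset.univ) => hterm i j),
        Finset.sum_add_distrib, Finset.sum_sub_distrib]
      have e1 : ∑ j, 2 * (c * M i j) = 2 * c * (2 * dn) := by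
        rw [← Finset.mul_sum, ← Finset.mul_sum, hMrow i]
        ring
      have e2 : ∑ j : Fin n, (if i = j then (0:ℝ) else c ^ 2) = (n : ℝ) * c ^ 2 - c ^ 2 := by
        have hfun : ∀ j : Fin n, (if i = j then (0:ℝ) else c ^ 2)
            = c ^ 2 - (if i = j then c ^ 2 else 0) := by
          intro j; by_cases hij : i = j <;> simp [hij]
        rw [Finset.sum_congr rfl (fun j (_ : j ∈ Finset.univ) => hfun j),
          Finset.sum_sub_distrib, Finset.sum_const, Finset.card_univ, Fintype.card_fin,
          Finset.sum_ite_eq, if_pos (Finset.mem_univ i), nsmul_eq_mul]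
      rw [e1, e2]
    rw [Finset.sum_congr rfl (fun i (_ : i ∈ Finset.univ) => hinner i),
      Finset.sum_add_distrib, Finset.sum_sub_distrib, ← hS, Finset.sum_const,
      Finset.sum_const, Finset.card_univ, Fintype.card_fin, nsmul_eq_mul, nsmul_eq_mul]
    -- now a polynomial identity using h1 and hcval
    refine mul_left_cancel₀ hnR1 ?_
    linear_combination h1 + ((n:ℝ) * (c * ((n:ℝ) - 1) - 2 * dn)) * hcval
  -- all off-diagonal entries of M equal c
  have hall : ∀ i j, i ≠ j → M i j = c := by
    intro i j hij
    have h1' := (Finset.sum_eq_zero_iff_of_nonneg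
      (fun i (_ : i ∈ Finset.univ) => Finset.sum_nonneg fun j _ => sq_nonneg _)).mp key i
      (Finset.mem_univ i)
    have h2' := (Finset.sum_eq_zero_iff_of_nonneg
      (fun j (_ : j ∈ Finset.univ) => sq_nonneg _)).mp h1' j (Finset.mem_univ j)
    have h3' := (pow_eq_zero_iff two_ne_zero).mp h2'
    have h4' := sub_eq_zero.mp h3'
    rwa [if_neg hij] at h4'
  -- pin down c
  have hcx : c = 1 + A x₂ x₁ := by
    rw [← hall x₁ x₂ hx, hMapp, hAxy]
  have hcy : c = A y₂ y₁ := by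
    rw [← hall y₁ y₂ hy, hMapp, hAy, zero_add]
  have hc1 : c = 1 := by
    have hle : c ≤ 1 := by rw [hcy]; exact hAle y₂ y₁
    have hge : 1 ≤ c := by rw [hcx]; have := hAnonneg x₂ x₁; linarith
    linarith
  -- product of opposite entries vanishes
  have hAprod : ∀ i j, A i j * A j i = 0 := by
    intro i j
    by_cases hij : i = j
    · subst hij; rw [hAdiag i, mul_zero]
    · have hsum : A i j + A j i = 1 := by
        have := hall i j hij
        rw [hMapp, hc1] at this
        linarith
      rcases hA01 i j with h' | h'
      · rw [h', zero_mul]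
      · have : A j i = 0 := by linarith
        rw [this, mul_zero]
  have htrAA : (A * A).trace = 0 := by
    simp only [Matrix.trace, Matrix.diag, Matrix.mul_apply]
    exact Finset.sum_eq_zero fun i _ => Finset.sum_eq_zero fun j _ => hAprod i j
  have hAtr : A.trace = 0 := by
    simp only [Matrix.trace, Matrix.diag]
    exact Finset.sum_eq_zero fun i _ => hAdiag i
  rcases apply_core_real n hn G h A dn hAinv hArow hcolval hAtr with h2 | h2
  · linarith
  · rw [htrAA, mul_zero] at h2
    have : dn ^ 2 > 0 := by positivity
    have : (n:ℝ) * dn ^ 2 > 0 := by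
      have hnpos : (0:ℝ) < n := by
        have : (2:ℝ) ≤ (n:ℝ) := by exact_mod_cast hn
        linarith
      positivity
    linarith



set_option maxHeartbeats 1000000 in
theorem fwd_dir (n : ℕ) (hn : 2 ≤ n) (G : Subgroup (Equiv.Perm (Fin n)))
    (h2t : ∀ x₁ x₂ y₁ y₂ : Fin n, x₁ ≠ x₂ → y₁ ≠ y₂ →
        ∃ σ ∈ G, σ x₁ = y₁ ∧ σ x₂ = y₂) :
    ∀ V : Submodule ℂ (Fin n → ℂ),
        (∀ σ ∈ G, ∀ a ∈ V, (fun i => a (σ i)) ∈ V) →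
        V = ⊥ ∨ V = ⊤ ∨
          V = Submodule.span ℂ {(fun _ => (1 : ℂ) : Fin n → ℂ)} ∨
          V = LinearMap.ker (∑ i : Fin n, LinearMap.proj (R := ℂ) (φ := fun _ : Fin n => ℂ) i) := by
  classical
  have hn0 : (n : ℂ) ≠ 0 := Nat.cast_ne_zero.mpr (by omega)
  haveI : Nontrivial (Fin n) :=
    ⟨⟨⟨0, by omega⟩, ⟨1, by omega⟩, by
      intro hcc
      have := congrArg Fin.val hcc
      simp at this⟩⟩
  set one : Fin n → ℂ := fun _ => 1 with honedef
  intro V hVinv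
  have htrans : ∀ p q : Fin n, ∃ σ ∈ G, σ p = q := by
    intro p q
    by_cases hpq : p = q
    · exact ⟨1, G.one_mem, by simp [hpq]⟩
    · obtain ⟨p', hp'⟩ := exists_ne p
      obtain ⟨q', hq'⟩ := exists_ne q
      obtain ⟨σ, hσ, h1, _⟩ := h2t p p' q q' (Ne.symm hp') (Ne.symm hq')
      exact ⟨σ, hσ, h1⟩
  set GF : Finset (Equiv.Perm (Fin n)) := Finset.univ.filter (fun σ => σ ∈ G) with hGFdef
  have hGF : ∀ σ, σ ∈ GF ↔ σ ∈ G := by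
    intro σ; simp [hGFdef]
  have hGFcard : (GF.card : ℂ) ≠ 0 := by
    have : GF.Nonempty := ⟨1, (hGF 1).mpr G.one_mem⟩
    simpa [Nat.cast_ne_zero] using Finset.card_ne_zero_of_mem this.choose_spec
  -- averaging: the projection of any v ∈ V to the constants lies in V
  have avg_mem : ∀ v ∈ V, (((∑ i, v i) / n) • one) ∈ V := by
    intro v hv
    set s : Fin n → ℂ := ∑ σ ∈ GF, (fun i => v (σ i)) with hs
    have hsV : s ∈ V := Submodule.sum_mem V (fun σ hσ => hVinv σ ((hGF σ).mp hσ) v hv)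
    have hsapp : ∀ p, s p = ∑ σ ∈ GF, v (σ p) := by
      intro p; rw [hs]; exact Finset.sum_apply p GF _
    have hconst : ∀ p q : Fin n, s q = s p := by
      intro p q
      obtain ⟨τ, hτ, hτp⟩ := htrans p q
      rw [hsapp, hsapp, ← hτp]
      have : ∀ σ : Equiv.Perm (Fin n), v (σ (τ p)) = v ((σ * τ) p) := fun σ => rfl
      rw [Finset.sum_congr rfl (fun σ (_ : σ ∈ GF) => this σ)]
      refine Finset.sum_equiv (Equiv.mulRight τ) (fun σ => ?_) (fun σ _ => rfl)
      constructor
      · intro hσ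
        exact (hGF _).mpr (G.mul_mem ((hGF σ).mp hσ) hτ)
      · intro hσ
        have := G.mul_mem ((hGF _).mp hσ) (G.inv_mem hτ)
        simpa using (hGF σ).mpr (by simpa using this)
    have htot : ∑ p, s p = (GF.card : ℂ) * (∑ i, v i) := by
      have h1 : ∀ p, s p = ∑ σ ∈ GF, v (σ p) := hsapp
      rw [Finset.sum_congr rfl (fun p (_ : p ∈ Finset.univ) => h1 p), Finset.sum_comm]
      rw [Finset.sum_congr rfl (fun σ (_ : σ ∈ GF) => Equiv.sum_comp σ v)]
      rw [Finset.sum_const, nsmul_eq_mul]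
    have hsval : ∀ p, (n : ℂ) * s p = (GF.card : ℂ) * (∑ i, v i) := by
      intro p
      rw [← htot, Finset.sum_congr rfl (fun q (_ : q ∈ Finset.univ) => hconst p q),
        Finset.sum_const, Finset.card_univ, Fintype.card_fin, nsmul_eq_mul]
    have haeq : ((∑ i, v i) / n) • one = ((GF.card : ℂ))⁻¹ • s := by
      funext i
      have := hsval i
      simp only [Pi.smul_apply, honedef, smul_eq_mul, mul_one]
      field_simp
      linear_combination -this
    rw [haeq]
    exact Submodule.smul_mem V _ hsV
  -- the quadruple fiber counts are all equal
  have hquad : ∀ (k p t q k' p' t' q' : Fin n), k ≠ p → t ≠ q → k' ≠ p' → t' ≠ q' →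
      (GF.filter (fun σ => σ k = t ∧ σ p = q)).card
      = (GF.filter (fun σ => σ k' = t' ∧ σ p' = q')).card := by
    intro k p t q k' p' t' q' hkp htq hkp' htq'
    obtain ⟨τ, hτ, hτ1, hτ2⟩ := h2t k' p' k p hkp' hkp
    obtain ⟨ρ, hρ, hρ1, hρ2⟩ := h2t t q t' q' htq htq'
    apply Finset.card_bij' (fun σ _ => ρ * σ * τ) (fun σ _ => ρ⁻¹ * σ * τ⁻¹)
    · intro σ hσ
      rw [Finset.mem_filter] at hσ ⊢
      obtain ⟨hσGF, hσ1, hσ2⟩ := hσ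
      refine ⟨(hGF _).mpr (G.mul_mem (G.mul_mem hρ ((hGF σ).mp hσGF)) hτ), ?_, ?_⟩
      · show ρ (σ (τ k')) = t'
        rw [hτ1, hσ1, hρ1]
      · show ρ (σ (τ p')) = q'
        rw [hτ2, hσ2, hρ2]
    · intro σ hσ
      rw [Finset.mem_filter] at hσ ⊢
      obtain ⟨hσGF, hσ1, hσ2⟩ := hσ
      refine ⟨(hGF _).mpr (G.mul_mem (G.mul_mem (G.inv_mem hρ) ((hGF σ).mp hσGF))
        (G.inv_mem hτ)), ?_, ?_⟩
      · show ρ⁻¹ (σ (τ⁻¹ k)) = t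
        rw [← hτ1, (Equiv.Perm.inv_eq_iff_eq.mpr rfl), hσ1, ← hρ1, (Equiv.Perm.inv_eq_iff_eq.mpr rfl)]
      · show ρ⁻¹ (σ (τ⁻¹ p)) = q
        rw [← hτ2, (Equiv.Perm.inv_eq_iff_eq.mpr rfl), hσ2, ← hρ2, (Equiv.Perm.inv_eq_iff_eq.mpr rfl)]
    · intro σ hσ
      ext r
      simp [Equiv.Perm.mul_apply]
    · intro σ hσ
      ext r
      simp [Equiv.Perm.mul_apply]
  -- K is contained in V once V contains a nonzero vector of K
  have hKsub : ∀ b ∈ V, (∑ i, b i = 0) → b ≠ 0 →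
      ∀ x : Fin n → ℂ, (∑ i, x i = 0) → x ∈ V := by
    intro b hbV hbsum hbne x hx
    have hij : ∃ i j : Fin n, b i ≠ b j := by
      by_contra hcc
      push_neg at hcc
      apply hbne
      funext r
      have hsum : ∑ i, b i = (n : ℂ) * b r := by
        rw [Finset.sum_congr rfl (fun q (_ : q ∈ Finset.univ) => hcc q r),
          Finset.sum_const, Finset.card_univ, Fintype.card_fin, nsmul_eq_mul]
      rw [hbsum] at hsum
      have := (mul_eq_zero.mp hsum.symm).resolve_left hn0
      exact this
    obtain ⟨i, j, hbij⟩ := hij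
    have hijne : i ≠ j := fun hcc => hbij (by rw [hcc])
    -- the vectors (n·e_k - 1) all lie in V
    have hchi : ∀ k : Fin n, (fun p => if p = k then ((n : ℂ) - 1) else -1) ∈ V := by
      intro k
      obtain ⟨p₀, hp₀⟩ := exists_ne k
      set m : ℕ := (GF.filter (fun σ => σ k = i ∧ σ p₀ = j)).card with hmdef
      have hmpos : 0 < m := by
        obtain ⟨σ, hσ, hσ1, hσ2⟩ := h2t k p₀ i j (Ne.symm hp₀) hijne
        exact Finset.card_pos.mpr ⟨σ, Finset.mem_filter.mpr ⟨(hGF σ).mpr hσ, hσ1, hσ2⟩⟩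
      -- the orbit sums
      have humem : ∀ t : Fin n, (∑ σ ∈ GF.filter (fun σ => σ k = t), (fun p => b (σ p))) ∈ V := by
        intro t
        refine Submodule.sum_mem V fun σ hσ => ?_
        have hσG : σ ∈ G := (hGF σ).mp (Finset.mem_filter.mp hσ).1
        exact hVinv σ hσG b hbV
      -- fiber computation for the coordinates
      have hfiber : ∀ (t q p : Fin n), p ≠ k → t ≠ q →
          ((GF.filter (fun σ => σ k = t)).filter (fun σ => σ p = q)).card = m := by
        intro t q p hpk htq
        rw [Finset.filter_filter]
        exact hquad k p t q k p₀ i j (Ne.symm hpk) htq (Ne.symm hp₀) hijne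
      have hfibert : ∀ (t p : Fin n), p ≠ k →
          ((GF.filter (fun σ => σ k = t)).filter (fun σ => σ p = t)).card = 0 := by
        intro t p hpk
        rw [Finset.card_eq_zero, Finset.filter_filter, Finset.filter_eq_empty_iff]
        rintro σ _
        rintro ⟨h1, h2⟩
        exact hpk (σ.injective (h2.trans h1.symm))
      have hucoord : ∀ (t p : Fin n), p ≠ k →
          (∑ σ ∈ GF.filter (fun σ => σ k = t), (fun p' => b (σ p'))) p = - (m : ℂ) * b t := by
        intro t p hpk
        rw [Finset.sum_apply]
        rw [← Finset.sum_fiberwise_of_maps_to (g := fun σ : Equiv.Perm (Fin n) => σ p)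
          (fun σ _ => Finset.mem_univ (σ p)) (fun σ => b (σ p))]
        have hterm : ∀ q : Fin n,
            ∑ σ ∈ (GF.filter (fun σ => σ k = t)).filter (fun σ => σ p = q), b (σ p)
            = (if q = t then 0 else (m : ℂ) * b q) := by
          intro q
          have : ∀ σ ∈ (GF.filter (fun σ => σ k = t)).filter (fun σ => σ p = q),
              b (σ p) = b q := by
            intro σ hσ
            rw [(Finset.mem_filter.mp hσ).2]
          rw [Finset.sum_congr rfl this, Finset.sum_const, nsmul_eq_mul]
          by_cases hq : q = t
          · rw [if_pos hq, hq, hfibert t p hpk]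
            simp
          · rw [if_neg hq, hfiber t q p hpk (fun hcc => hq hcc.symm)]
        rw [Finset.sum_congr rfl (fun q (_ : q ∈ Finset.univ) => hterm q)]
        have hsplit : ∀ q : Fin n, (if q = t then (0:ℂ) else (m:ℂ) * b q)
            = (m:ℂ) * b q - (if q = t then (m:ℂ) * b q else 0) := by
          intro q; by_cases hq : q = t <;> simp [hq]
        rw [Finset.sum_congr rfl (fun q (_ : q ∈ Finset.univ) => hsplit q),
          Finset.sum_sub_distrib, ← Finset.mul_sum, hbsum, mul_zero,
          Finset.sum_ite_eq' Finset.univ t, if_pos (Finset.mem_univ t)]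
        ring
      have hTcard : ∀ t : Fin n, (GF.filter (fun σ => σ k = t)).card = (n - 1) * m := by
        intro t
        rw [Finset.card_eq_sum_card_fiberwise (f := fun σ : Equiv.Perm (Fin n) => σ p₀)
          (t := Finset.univ) (fun σ _ => Finset.mem_univ _)]
        have hfib : ∀ q : Fin n,
            ((GF.filter (fun σ => σ k = t)).filter (fun σ => σ p₀ = q)).card
            = if q = t then 0 else m := by
          intro q
          by_cases hq : q = t
          · rw [if_pos hq, hq]; exact hfibert t p₀ hp₀
          · rw [if_neg hq]; exact hfiber t q p₀ hp₀ (fun hcc => hq hcc.symm)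
        rw [Finset.sum_congr rfl (fun q (_ : q ∈ Finset.univ) => hfib q), Finset.sum_ite,
          Finset.sum_const, Finset.sum_const, smul_eq_mul, smul_eq_mul, mul_zero, zero_add]
        have : Finset.univ.filter (fun q : Fin n => ¬ q = t) = Finset.univ.erase t := by
          ext q; simp [Finset.mem_erase, and_comm]
        rw [this, Finset.card_erase_of_mem (Finset.mem_univ t), Finset.card_univ,
          Fintype.card_fin]
      have hucoordk : ∀ t : Fin n,
          (∑ σ ∈ GF.filter (fun σ => σ k = t), (fun p' => b (σ p'))) k
          = (((n - 1) * m : ℕ) : ℂ) * b t := by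
        intro t
        rw [Finset.sum_apply]
        have : ∀ σ ∈ GF.filter (fun σ => σ k = t), b (σ k) = b t := by
          intro σ hσ
          rw [(Finset.mem_filter.mp hσ).2]
        rw [Finset.sum_congr rfl this, Finset.sum_const, hTcard t, nsmul_eq_mul]
      -- the difference of two orbit sums
      set z : Fin n → ℂ := (∑ σ ∈ GF.filter (fun σ => σ k = i), (fun p => b (σ p)))
        - (∑ σ ∈ GF.filter (fun σ => σ k = j), (fun p => b (σ p))) with hz
      have hzV : z ∈ V := Submodule.sub_mem V (humem i) (humem j)
      have hzcoord : ∀ p : Fin n, z p = (if p = k then (((n-1) * m : ℕ) : ℂ) * (b i - b j)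
          else - (m:ℂ) * (b i - b j)) := by
        intro p
        by_cases hp : p = k
        · subst hp
          rw [if_pos rfl, hz, Pi.sub_apply, hucoordk i, hucoordk j]
          ring
        · rw [if_neg hp, hz, Pi.sub_apply, hucoord i p hp, hucoord j p hp]
          ring
      have hmne : ((m : ℂ) * (b i - b j)) ≠ 0 := by
        apply mul_ne_zero
        · exact Nat.cast_ne_zero.mpr hmpos.ne'
        · exact sub_ne_zero.mpr hbij
      have hchieq : (fun p => if p = k then ((n : ℂ) - 1) else -1)
          = ((m : ℂ) * (b i - b j))⁻¹ • z := by
        funext p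
        rw [Pi.smul_apply, hzcoord p, smul_eq_mul]
        by_cases hp : p = k
        · rw [if_pos hp, if_pos hp]
          have hcast : (((n - 1) * m : ℕ) : ℂ) = ((n : ℂ) - 1) * m := by
            push_cast [Nat.cast_sub (by omega : 1 ≤ n)]
            ring
          rw [hcast]
          have hm0 : (m:ℂ) ≠ 0 := Nat.cast_ne_zero.mpr hmpos.ne'
          field_simp
        · rw [if_neg hp, if_neg hp]
          have hm0 : (m:ℂ) ≠ 0 := Nat.cast_ne_zero.mpr hmpos.ne'
          field_simp
      rw [hchieq]
      exact Submodule.smul_mem V _ hzV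
    -- write x as a combination of the chi vectors
    have hxsum : x = ∑ k, ((x k) / n) • (fun p => if p = k then ((n:ℂ) - 1) else -1) := by
      funext p
      rw [Finset.sum_apply]
      have happ : ∀ k : Fin n, (((x k) / n) • (fun p' => if p' = k then ((n:ℂ)-1) else -1)) p
          = (x k / n) * (if p = k then ((n:ℂ)-1) else -1) := fun k => rfl
      rw [Finset.sum_congr rfl (fun k (_ : k ∈ Finset.univ) => happ k)]
      have hsplit : ∀ k : Fin n, (x k / n) * (if p = k then ((n:ℂ)-1) else -1)
          = (if p = k then (x k / n) * n else 0) - (x k / n) := by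
        intro k
        by_cases hk : p = k
        · rw [if_pos hk, if_pos hk]; ring
        · rw [if_neg hk, if_neg hk]; ring
      rw [Finset.sum_congr rfl (fun k (_ : k ∈ Finset.univ) => hsplit k),
        Finset.sum_sub_distrib, Finset.sum_ite_eq Finset.univ p, if_pos (Finset.mem_univ p),
        ← Finset.sum_div, hx]
      field_simp
      ring
    rw [hxsum]
    exact Submodule.sum_mem V fun k _ => Submodule.smul_mem V _ (hchi k)
  -- main case analysis
  have hmemK : ∀ x : Fin n → ℂ,
      x ∈ LinearMap.ker (∑ i : Fin n, LinearMap.proj (R := ℂ) (φ := fun _ : Fin n => ℂ) i)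
      ↔ ∑ i, x i = 0 := by
    intro x
    simp [LinearMap.mem_ker, LinearMap.sum_apply, LinearMap.proj_apply]
  by_cases hconstV : ∀ v ∈ V, ∀ p q : Fin n, v p = v q
  · by_cases hVbot : V = ⊥
    · exact Or.inl hVbot
    · right; right; left
      obtain ⟨v, hvV, hvne⟩ := Submodule.exists_mem_ne_zero_of_ne_bot hVbot
      set p₀ : Fin n := ⟨0, by omega⟩ with hp₀
      have hv0 : v p₀ ≠ 0 := by
        intro hcc
        apply hvne
        funext r
        rw [hconstV v hvV r p₀, hcc]
        simp
      have honeV : one ∈ V := by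
        have hsm : (v p₀)⁻¹ • v ∈ V := Submodule.smul_mem V _ hvV
        have : (v p₀)⁻¹ • v = one := by
          funext r
          rw [Pi.smul_apply, smul_eq_mul, hconstV v hvV r p₀, honedef]
          field_simp
        rwa [this] at hsm
      apply le_antisymm
      · intro w hw
        rw [Submodule.mem_span_singleton]
        refine ⟨w p₀, ?_⟩
        funext r
        rw [Pi.smul_apply, honedef, smul_eq_mul, mul_one, hconstV w hw r p₀]
      · rw [Submodule.span_singleton_le_iff_mem]
        exact honeV
  · push_neg at hconstV
    obtain ⟨v, hvV, p, q, hvpq⟩ := hconstV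
    have haV : (((∑ i, v i) / n) • one) ∈ V := avg_mem v hvV
    set b : Fin n → ℂ := v - ((∑ i, v i) / n) • one with hb
    have hbV : b ∈ V := Submodule.sub_mem V hvV haV
    have hbsum : ∑ i, b i = 0 := by
      rw [hb]
      simp only [Pi.sub_apply, Pi.smul_apply, honedef, smul_eq_mul, mul_one]
      rw [Finset.sum_sub_distrib, Finset.sum_const, Finset.card_univ, Fintype.card_fin,
        nsmul_eq_mul]
      field_simp
      ring
    have hbne : b ≠ 0 := by
      intro hcc
      apply hvpq
      have h1 := congrFun hcc p
      have h2 := congrFun hcc q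
      simp only [hb, Pi.sub_apply, Pi.smul_apply, honedef, smul_eq_mul, mul_one,
        Pi.zero_apply, sub_eq_zero] at h1 h2
      rw [h1, h2]
    have hK : ∀ x : Fin n → ℂ, (∑ i, x i = 0) → x ∈ V := hKsub b hbV hbsum hbne
    by_cases honeV : one ∈ V
    · right; left
      rw [eq_top_iff]
      intro y _
      have h1 : (y - ((∑ i, y i) / n) • one) ∈ V := by
        apply hK
        simp only [Pi.sub_apply, Pi.smul_apply, honedef, smul_eq_mul, mul_one]
        rw [Finset.sum_sub_distrib, Finset.sum_const, Finset.card_univ, Fintype.card_fin,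
          nsmul_eq_mul]
        field_simp
        ring
      have h2 : (((∑ i, y i) / n) • one) ∈ V := Submodule.smul_mem V _ honeV
      have := Submodule.add_mem V h2 h1
      simpa using this
    · right; right; right
      apply le_antisymm
      · intro y hyV
        rw [hmemK]
        by_contra hys
        apply honeV
        have ha' : (((∑ i, y i) / n) • one) ∈ V := avg_mem y hyV
        have hsm : (((∑ i, y i) / n))⁻¹ • ((((∑ i, y i) / n)) • one) ∈ V :=
          Submodule.smul_mem V _ ha'
        rw [smul_smul, inv_mul_cancel₀ (by
          intro hcc
          apply hys
          field_simp at hcc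
          simpa using hcc), one_smul] at hsm
        exact hsm
      · intro y hyK
        exact hK y ((hmemK y).mp hyK)

/-- A subgroup `G ≤ Sym(Fin n)`, `n ≥ 2`, is doubly transitive iff the only
subspaces of `ℂⁿ` invariant under the permutation action of `G` are `⊥`, `⊤`,
the line `E` spanned by `(1,…,1)`, and its orthogonal complement
`E^⊥ = {x : ∑ i, x i = 0}`. -/
theorem doubly_transitive_iff_invariant_subspaces
    (n : ℕ) (hn : 2 ≤ n) (G : Subgroup (Equiv.Perm (Fin n))) :
    (∀ x₁ x₂ y₁ y₂ : Fin n, x₁ ≠ x₂ → y₁ ≠ y₂ →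
        ∃ σ ∈ G, σ x₁ = y₁ ∧ σ x₂ = y₂) ↔
      (∀ V : Submodule ℂ (Fin n → ℂ),
        (∀ σ ∈ G, ∀ a ∈ V, (fun i => a (σ i)) ∈ V) →
        V = ⊥ ∨ V = ⊤ ∨
          V = Submodule.span ℂ {(fun _ => (1 : ℂ) : Fin n → ℂ)} ∨
          V = LinearMap.ker (∑ i : Fin n, LinearMap.proj (R := ℂ) (φ := fun _ : Fin n => ℂ) i)) :=
  ⟨fun h2t => fwd_dir n hn G h2t, fun h => rev_dir n hn G h⟩
end

section
/- Let P be a nonconstant complex polynomial and let V ⊆ ℂ be an open set containing no critical value of P (there is no z ∈ ℂ with P'(z) = 0 and P(z) ∈ V). Then the restriction of the evaluation map z ↦ P(z), viewed as a map from the subspace P⁻¹(V) ⊆ ℂ onto the subspace V ⊆ ℂ, is a covering map. -/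
open Topology Filter Set

section General

variable {E X ι : Type*} [TopologicalSpace E] [TopologicalSpace X] [TopologicalSpace ι]

theorem isEvenlyCovered_of_disjoint_partialHomeomorphs
    [DiscreteTopology ι] [Nonempty ι]
    (f : E → X) (hf : Continuous f) {W : Set X} (hW : IsOpen W) {x : X} (hx : x ∈ W)
    (φ : ι → OpenPartialHomeomorph E X)
    (heq : ∀ i, ∀ e ∈ (φ i).source, φ i e = f e)
    (htgt : ∀ i, W ⊆ (φ i).target)
    (hdisj : Pairwise fun i j => Disjoint (φ i).source (φ j).source)
    (hcover : f ⁻¹' W ⊆ ⋃ i, (φ i).source) :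
    IsEvenlyCovered f x ι := by
  classical
  set idx : E → ι := fun e => if h : ∃ i, e ∈ (φ i).source then h.choose else Classical.arbitrary ι
    with hidx
  have idx_eq : ∀ {e : E} {i : ι}, e ∈ (φ i).source → idx e = i := by
    intro e i hi
    have hex : ∃ j, e ∈ (φ j).source := ⟨i, hi⟩
    have hspec : e ∈ (φ hex.choose).source := hex.choose_spec
    by_contra hne
    rw [hidx] at hne
    simp only [dif_pos hex] at hne
    exact (hdisj hne).le_bot ⟨hspec, hi⟩
  have mem_of : ∀ {e : E}, e ∈ f ⁻¹' W → e ∈ (φ (idx e)).source := by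
    intro e he
    obtain ⟨t, ⟨i, rfl⟩, hi⟩ := hcover he
    rwa [idx_eq hi]
  have hfsymm : ∀ (i : ι) {y : X}, y ∈ W → f ((φ i).symm y) = y := by
    intro i y hy
    have h1 : y ∈ (φ i).target := htgt i hy
    rw [← heq i _ ((φ i).map_target h1), (φ i).right_inv h1]
  exact IsEvenlyCovered.of_trivialization (t := {
      toFun := fun e => (f e, idx e)
      invFun := fun p => (φ p.2).symm p.1
      source := f ⁻¹' W
      target := W ×ˢ Set.univ
      map_source' := fun e he => ⟨he, trivial⟩
      map_target' := fun p hp => by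
        simpa only [Set.mem_preimage, hfsymm p.2 hp.1] using hp.1
      left_inv' := fun e he => by
        show (φ (idx e)).symm (f e) = e
        rw [← heq _ _ (mem_of he)]
        exact (φ _).left_inv (mem_of he)
      right_inv' := fun p hp => by
        have h1 : p.1 ∈ (φ p.2).target := htgt p.2 hp.1
        refine Prod.ext (hfsymm p.2 hp.1) (idx_eq ((φ p.2).map_target h1))
      open_source := hW.preimage hf
      open_target := hW.prod isOpen_univ
      continuousOn_toFun := by
        refine (hf.continuousOn).prodMk ?_
        intro e he
        have hev : ∀ᶠ e' in 𝓝 e, idx e' = idx e :=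
          Filter.eventually_of_mem ((φ (idx e)).open_source.mem_nhds (mem_of he))
            fun e' h' => idx_eq h'
        exact (continuousAt_const.congr (by filter_upwards [hev] with a ha using ha.symm)
          ).continuousWithinAt
      continuousOn_invFun := by
        intro p hp
        have h1 : p.1 ∈ (φ p.2).target := htgt p.2 hp.1
        have hc : ContinuousAt (fun q : X × ι => (φ q.2).symm q.1) p := by
          have hg : ContinuousAt (fun q : X × ι => (φ p.2).symm q.1) p :=
            ((φ p.2).continuousOn_symm.continuousAt
              ((φ p.2).open_target.mem_nhds h1)).comp continuousAt_fst
          refine hg.congr ?_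
          have : ∀ᶠ q : X × ι in 𝓝 p, q.2 = p.2 :=
            Filter.eventually_of_mem
              ((isOpen_discrete {p.2}).preimage continuous_snd |>.mem_nhds rfl)
              fun q hq => hq
          filter_upwards [this] with q hq
          rw [hq]
        exact hc.continuousWithinAt
      baseSet := W
      open_baseSet := hW
      source_eq := rfl
      target_eq := rfl
      proj_toFun := fun e _ => rfl }) hx

end General

open Topology Filter Set
open scoped Classical

noncomputable def restrictPH {α β : Type*} [TopologicalSpace α] [TopologicalSpace β]
    (e : OpenPartialHomeomorph α β) {A : Set α} {B : Set β} [Nonempty A] [Nonempty B]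
    (hs : e.source ⊆ A) (ht : e.target ⊆ B) : OpenPartialHomeomorph ↥A ↥B where
  toFun a := if h : (e : α → β) a ∈ B then ⟨e a, h⟩ else Classical.arbitrary _
  invFun b := if h : e.symm b ∈ A then ⟨e.symm b, h⟩ else Classical.arbitrary _
  source := Subtype.val ⁻¹' e.source
  target := Subtype.val ⁻¹' e.target
  map_source' := fun a ha => by
    have h1 : (e : α → β) a.1 ∈ e.target := e.map_source ha
    simp only [dif_pos (ht h1)]
    exact h1
  map_target' := fun b hb => by
    have h1 : e.symm b.1 ∈ e.source := e.map_target hb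
    simp only [dif_pos (hs h1)]
    exact h1
  left_inv' := fun a ha => by
    have h1 : (e : α → β) a.1 ∈ e.target := e.map_source ha
    simp only [dif_pos (ht h1), e.left_inv ha, dif_pos (hs ha)]
  right_inv' := fun b hb => by
    have h1 : e.symm b.1 ∈ e.source := e.map_target hb
    simp only [dif_pos (hs h1), e.right_inv hb, dif_pos (ht hb)]
  open_source := e.open_source.preimage continuous_subtype_val
  open_target := e.open_target.preimage continuous_subtype_val
  continuousOn_toFun := by
    rw [Topology.IsInducing.subtypeVal.continuousOn_iff]
    refine ContinuousOn.congr
      (e.continuousOn.comp continuous_subtype_val.continuousOn fun a ha => ha) ?_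
    intro a ha
    simp only [Function.comp_apply, dif_pos (ht (e.map_source ha))]
  continuousOn_invFun := by
    rw [Topology.IsInducing.subtypeVal.continuousOn_iff]
    refine ContinuousOn.congr
      (e.continuousOn_symm.comp continuous_subtype_val.continuousOn fun b hb => hb) ?_
    intro b hb
    simp only [Function.comp_apply, dif_pos (hs (e.map_target hb))]

theorem restrictPH_source {α β : Type*} [TopologicalSpace α] [TopologicalSpace β]
    (e : OpenPartialHomeomorph α β) {A : Set α} {B : Set β} [Nonempty A] [Nonempty B]
    (hs : e.source ⊆ A) (ht : e.target ⊆ B) :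
    (restrictPH e hs ht).source = Subtype.val ⁻¹' e.source := rfl

theorem restrictPH_target {α β : Type*} [TopologicalSpace α] [TopologicalSpace β]
    (e : OpenPartialHomeomorph α β) {A : Set α} {B : Set β} [Nonempty A] [Nonempty B]
    (hs : e.source ⊆ A) (ht : e.target ⊆ B) :
    (restrictPH e hs ht).target = Subtype.val ⁻¹' e.target := rfl

theorem restrictPH_apply {α β : Type*} [TopologicalSpace α] [TopologicalSpace β]
    (e : OpenPartialHomeomorph α β) {A : Set α} {B : Set β} [Nonempty A] [Nonempty B]
    (hs : e.source ⊆ A) (ht : e.target ⊆ B) {a : ↥A} (ha : a.1 ∈ e.source) :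
    ((restrictPH e hs ht) a : β) = e a.1 := by
  simp only [restrictPH, OpenPartialHomeomorph.coe_mk]
  rw [dif_pos (ht (e.map_source ha))]

open Polynomial



open Polynomial

/-- If `P` is a nonconstant complex polynomial and `V ⊆ ℂ` is an open set
containing no critical value of `P`, then the restriction
`P : P⁻¹(V) → V` is a covering map. -/
theorem polynomial_restriction_isCoveringMap
    (P : ℂ[X]) (hP : 1 ≤ P.natDegree) (V : Set ℂ) (hV : IsOpen V)
    (hcrit : ¬ ∃ z : ℂ, P.derivative.eval z = 0 ∧ P.eval z ∈ V) :
    IsCoveringMap (fun z : ↥(P.eval ⁻¹' V) => (⟨P.eval z.1, z.2⟩ : ↥V)) := by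
  classical
  intro x
  push_neg at hcrit
  set f : ↥(P.eval ⁻¹' V) → ↥V := fun z => (⟨P.eval z.1, z.2⟩ : ↥V) with hfdef
  have hPcont : Continuous fun z : ℂ => P.eval z := P.continuous
  set v : ℂ := (x : ℂ) with hvdef
  have hv : v ∈ V := x.2
  have hdegP : 0 < P.degree := natDegree_pos_iff_degree_pos.mp hP
  have hQdeg : (P - C v).degree = P.degree := degree_sub_C hdegP
  have hQ0 : P - C v ≠ 0 := by
    intro h
    rw [h, degree_zero] at hQdeg
    exact absurd (hQdeg ▸ hdegP) (by simp)
  have hFib : ∀ z : ℂ, P.eval z = v ↔ (P - C v).IsRoot z := by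
    intro z; simp [IsRoot, sub_eq_zero]
  set F : Set ℂ := {z | P.eval z = v} with hFdef
  have hFfin : F.Finite :=
    (Polynomial.finite_setOf_isRoot hQ0).subset fun z hz => (hFib z).1 hz
  obtain ⟨z₀, hz₀⟩ := Complex.exists_root (hQdeg ▸ hdegP)
  have hz₀F : z₀ ∈ F := (hFib z₀).2 hz₀
  have hz₀V : P.eval z₀ ∈ V := by
    have : P.eval z₀ = v := hz₀F
    rw [this]; exact hv
  haveI : Nonempty ↥(P.eval ⁻¹' V) := ⟨⟨z₀, hz₀V⟩⟩
  haveI : Nonempty ↥V := ⟨x⟩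
  haveI : Finite ↥F := hFfin.to_subtype
  haveI : Nonempty ↥F := ⟨⟨z₀, hz₀F⟩⟩
  have hder : ∀ z ∈ F, P.derivative.eval z ≠ 0 := by
    intro z hz h0
    exact hcrit z h0 (by rw [show P.eval z = v from hz]; exact hv)
  obtain ⟨U, hU, hUdisj⟩ := hFfin.t2_separation
  -- local homeomorphisms at the ℂ level
  set ψ : ↥F → OpenPartialHomeomorph ℂ ℂ := fun z =>
    (((P.hasStrictDerivAt z.1).hasStrictFDerivAt_equiv
        (hder z.1 z.2)).toOpenPartialHomeomorph (fun w => P.eval w)).restrOpen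
      (U z.1 ∩ P.eval ⁻¹' V) ((hU z.1).2.inter (hV.preimage hPcont)) with hψdef
  have hψcoe : ∀ z : ↥F, ⇑(ψ z) = fun w => P.eval w := fun z =>
    HasStrictFDerivAt.toOpenPartialHomeomorph_coe
      ((P.hasStrictDerivAt z.1).hasStrictFDerivAt_equiv (hder z.1 z.2))
  have hψsrc : ∀ z : ↥F, (ψ z).source =
      (((P.hasStrictDerivAt z.1).hasStrictFDerivAt_equiv
        (hder z.1 z.2)).toOpenPartialHomeomorph (fun w => P.eval w)).source
        ∩ (U z.1 ∩ P.eval ⁻¹' V) := fun z =>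
    OpenPartialHomeomorph.restrOpen_source _ _ _
  have hmemsrc : ∀ z : ↥F, z.1 ∈ (ψ z).source := by
    intro z
    rw [hψsrc]
    exact ⟨HasStrictFDerivAt.mem_toOpenPartialHomeomorph_source
      ((P.hasStrictDerivAt z.1).hasStrictFDerivAt_equiv (hder z.1 z.2)),
      (hU z.1).1, by show P.eval z.1 ∈ V; rw [show P.eval z.1 = v from z.2]; exact hv⟩
  have hsrcU : ∀ z : ↥F, (ψ z).source ⊆ U z.1 := by
    intro z w hw; rw [hψsrc] at hw; exact hw.2.1
  have hsrcV : ∀ z : ↥F, (ψ z).source ⊆ P.eval ⁻¹' V := by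
    intro z w hw; rw [hψsrc] at hw; exact hw.2.2
  have htgtV : ∀ z : ↥F, (ψ z).target ⊆ V := by
    intro z t ht
    have h1 : (ψ z).symm t ∈ (ψ z).source := (ψ z).map_target ht
    have h2 : (ψ z) ((ψ z).symm t) = t := (ψ z).right_inv ht
    have h3 : P.eval ((ψ z).symm t) = t := by rw [hψcoe] at h2; exact h2
    rw [← h3]; exact hsrcV z h1
  -- the base open set
  have hproper : IsProperMap (fun z : ℂ => P.eval z) := by
    rw [isProperMap_iff_tendsto_cocompact]
    refine ⟨hPcont, ?_⟩
    have hnorm : Filter.Tendsto (fun z : ℂ => ‖P.eval z‖) (Filter.cocompact ℂ)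
        Filter.atTop := P.tendsto_norm_atTop hdegP tendsto_norm_cocompact_atTop
    have hcb : Filter.Tendsto (fun z : ℂ => P.eval z) (Filter.cocompact ℂ)
        (Bornology.cobounded ℂ) := by
      rw [← comap_norm_atTop, Filter.tendsto_comap_iff]
      exact hnorm
    exact (Metric.cobounded_eq_cocompact (α := ℂ)) ▸ hcb
  have hclosed : IsClosed (P.eval '' (⋃ z : ↥F, (ψ z).source)ᶜ) :=
    hproper.isClosedMap _ (isOpen_iUnion fun z => (ψ z).open_source).isClosed_compl
  set W₀ : Set ℂ := (V ∩ ⋂ z : ↥F, (ψ z).target) ∩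
      (P.eval '' (⋃ z : ↥F, (ψ z).source)ᶜ)ᶜ with hW₀def
  have hW₀open : IsOpen W₀ :=
    ((hV.inter (isOpen_iInter_of_finite fun z => (ψ z).open_target))).inter
      hclosed.isOpen_compl
  have hvW₀ : v ∈ W₀ := by
    refine ⟨⟨hv, ?_⟩, ?_⟩
    · refine Set.mem_iInter.mpr fun z => ?_
      have h := (ψ z).map_source (hmemsrc z)
      rwa [show (ψ z) z.1 = v from by rw [hψcoe]; exact z.2] at h
    · rintro ⟨w, hwC, hwP⟩
      exact hwC (Set.mem_iUnion.mpr ⟨⟨w, hwP⟩, hmemsrc ⟨w, hwP⟩⟩)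
  have hW₀tgt : ∀ z : ↥F, W₀ ⊆ (ψ z).target := fun z w hw =>
    Set.mem_iInter.mp hw.1.2 z
  -- subtype-level partial homeomorphisms
  set χ : ↥F → OpenPartialHomeomorph ↥(P.eval ⁻¹' V) ↥V := fun z =>
    restrictPH (ψ z) (hsrcV z) (htgtV z) with hχdef
  have hev : IsEvenlyCovered f x ↥F := by
    refine isEvenlyCovered_of_disjoint_partialHomeomorphs f
      (Continuous.subtype_mk (hPcont.comp continuous_subtype_val) _)
      (hW₀open.preimage continuous_subtype_val) (show v ∈ W₀ from hvW₀) χ ?_ ?_ ?_ ?_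
    · intro z a ha
      have ha' : a.1 ∈ (ψ z).source := ha
      apply Subtype.ext
      rw [restrictPH_apply (ψ z) (hsrcV z) (htgtV z) ha', hψcoe]
    · intro z w hw
      exact hW₀tgt z hw
    · intro i j hij
      rw [Set.disjoint_left]
      intro a hai haj
      have : Disjoint (U i.1) (U j.1) :=
        hUdisj i.2 j.2 (fun h => hij (Subtype.ext h))
      exact (Set.disjoint_left.mp this) (hsrcU i hai) (hsrcU j haj)
    · intro a ha
      have haW : P.eval a.1 ∈ W₀ := ha
      have : a.1 ∈ ⋃ z : ↥F, (ψ z).source := by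
        by_contra hc
        exact haW.2 ⟨a.1, hc, rfl⟩
      obtain ⟨t, ⟨z, rfl⟩, hz⟩ := this
      exact Set.mem_iUnion.mpr ⟨z, hz⟩
  exact hev.to_isEvenlyCovered_preimage
end
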